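/- arXiv:math/0607357 — 5 statements merged into one kernel-verified Lean document; each statement's English description precedes it below -/
import Mathlib

section
/- There exists a universal constant C > 0 such that for all t, ν, L, r > 0, ∫_0^t ∑_{k=1}^∞ sup_{η∈[k−1,k]} |∂_η( exp(−2τνπ²η²/L²)·cos(πηr/L) )| dτ ≤ C·(1/L)·√(t/ν)·(r + √(tν))·(L + √(tν)). -/
open Real MeasureTheory


lemma sqrt_pi_le_two : Real.sqrt π ≤ 2 := by
  rw [show (2:ℝ) = Real.sqrt 4 by rw [show (4:ℝ) = 2^2 by norm_num, Real.sqrt_sq (by norm_num)]]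
  exact Real.sqrt_le_sqrt (by nlinarith [Real.pi_le_four])

lemma gauss_sum_le (c : ℝ) (hc : 0 < c) :
    ∑' k : ℕ, Real.exp (-(c * (k : ℝ) ^ 2)) ≤ 1 + 1 / Real.sqrt c := by
  have hsc : 0 < Real.sqrt c := Real.sqrt_pos.2 hc
  have hint : IntegrableOn (fun x : ℝ => Real.exp (-c * x ^ 2)) (Set.Ioi 0) :=
    (integrable_exp_neg_mul_sq hc).integrableOn
  have htail : ∀ m : ℕ,
      (∑ i ∈ Finset.range m, Real.exp (-(c * ((i : ℝ) + 1) ^ 2))) ≤ 1 / Real.sqrt c := by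
    intro m
    have hanti : AntitoneOn (fun x : ℝ => Real.exp (-c * x ^ 2)) (Set.Icc (0:ℝ) (0 + (m:ℕ))) := by
      intro x hx y hy hxy
      simp only
      apply Real.exp_le_exp.2
      have hx0 : 0 ≤ x := hx.1
      have hsq : x ^ 2 ≤ y ^ 2 := by nlinarith
      nlinarith
    have h1 := hanti.sum_le_integral
    have h2 : (∑ i ∈ Finset.range m, Real.exp (-(c * ((i : ℝ) + 1) ^ 2)))
        ≤ ∫ x in (0:ℝ)..(0 + (m:ℕ)), Real.exp (-c * x ^ 2) := by
      refine le_trans (le_of_eq ?_) h1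
      apply Finset.sum_congr rfl
      intro i _
      push_cast
      ring_nf
    have h3 : (∫ x in (0:ℝ)..(0 + (m:ℕ)), Real.exp (-c * x ^ 2))
        ≤ ∫ x in Set.Ioi (0:ℝ), Real.exp (-c * x ^ 2) := by
      rw [zero_add, intervalIntegral.integral_of_le (by positivity)]
      apply setIntegral_mono_set hint
      · filter_upwards with x using Real.exp_nonneg _
      · filter_upwards with x using fun hx => hx.1
    have h4 : (∫ x in Set.Ioi (0:ℝ), Real.exp (-c * x ^ 2)) = Real.sqrt (π / c) / 2 :=
      integral_gaussian_Ioi c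
    have h5 : Real.sqrt (π / c) / 2 ≤ 1 / Real.sqrt c := by
      rw [Real.sqrt_div Real.pi_pos.le, div_div, div_le_div_iff₀ (by positivity) hsc]
      nlinarith [sqrt_pi_le_two]
    calc _ ≤ _ := h2
      _ ≤ _ := h3
      _ = _ := h4
      _ ≤ _ := h5
  apply Real.tsum_le_of_sum_range_le (fun n => Real.exp_nonneg _)
  intro n
  match n with
  | 0 => simp; positivity
  | (m+1) =>
    rw [Finset.sum_range_succ']
    push_cast
    rw [show -(c * (0:ℝ) ^ 2) = 0 by ring, Real.exp_zero]
    linarith [htail m]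


lemma tsum_sup_le (τ ν L r : ℝ) (hτ : 0 < τ) (hν : 0 < ν) (hL : 0 < L) (hr : 0 < r) :
    (∑' k : ℕ, ⨆ η ∈ Set.Icc (k : ℝ) ((k : ℝ) + 1),
        |deriv (fun y : ℝ =>
          Real.exp (-2 * τ * ν * π ^ 2 * y ^ 2 / L ^ 2) * Real.cos (π * y * r / L)) η|)
      ≤ (4 * Real.sqrt (τ * ν * π ^ 2 / L ^ 2) + π * r / L) *
        (1 + 1 / Real.sqrt (τ * ν * π ^ 2 / L ^ 2)) := by
  set c : ℝ := τ * ν * π ^ 2 / L ^ 2 with hc_def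
  set b : ℝ := π * r / L with hb_def
  have hc : 0 < c := by rw [hc_def]; positivity
  have hb : 0 < b := by rw [hb_def]; positivity
  have hsc : 0 < Real.sqrt c := Real.sqrt_pos.2 hc
  -- rewrite the function
  have hfun : (fun y : ℝ =>
      Real.exp (-2 * τ * ν * π ^ 2 * y ^ 2 / L ^ 2) * Real.cos (π * y * r / L))
      = fun y : ℝ => Real.exp (-(2 * c) * y ^ 2) * Real.cos (b * y) := by
    funext y
    rw [show -2 * τ * ν * π ^ 2 * y ^ 2 / L ^ 2 = -(2 * c) * y ^ 2 by rw [hc_def]; ring,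
      show π * y * r / L = b * y by rw [hb_def]; ring]
  -- derivative formula
  have hder : ∀ η : ℝ,
      deriv (fun y : ℝ => Real.exp (-(2 * c) * y ^ 2) * Real.cos (b * y)) η
      = Real.exp (-(2 * c) * η ^ 2) * (-(2 * c) * (2 * η)) * Real.cos (b * η)
        + Real.exp (-(2 * c) * η ^ 2) * (-Real.sin (b * η) * b) := by
    intro η
    have h1 : HasDerivAt (fun y : ℝ => -(2 * c) * y ^ 2) (-(2 * c) * (2 * η)) η := by
      have := (hasDerivAt_pow 2 η).const_mul (-(2 * c))
      exact this.congr_deriv (by norm_num)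
    have h2 : HasDerivAt (fun y : ℝ => b * y) b η := by
      simpa using (hasDerivAt_id η).const_mul b
    exact ((h1.exp).mul (h2.cos)).deriv
  -- pointwise bound on each interval
  have hptwise : ∀ (k : ℕ) (η : ℝ), η ∈ Set.Icc (k : ℝ) ((k : ℝ) + 1) →
      |deriv (fun y : ℝ => Real.exp (-(2 * c) * y ^ 2) * Real.cos (b * y)) η|
      ≤ (4 * Real.sqrt c + b) * Real.exp (-(c * (k : ℝ) ^ 2)) := by
    intro k η hη
    have hk0 : (0:ℝ) ≤ (k : ℝ) := Nat.cast_nonneg k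
    have hη0 : 0 ≤ η := le_trans hk0 hη.1
    rw [hder η]
    have habs : |Real.exp (-(2 * c) * η ^ 2) * (-(2 * c) * (2 * η)) * Real.cos (b * η)
        + Real.exp (-(2 * c) * η ^ 2) * (-Real.sin (b * η) * b)|
        ≤ Real.exp (-(2 * c) * η ^ 2) * (4 * c * η)
          + Real.exp (-(2 * c) * η ^ 2) * b := by
      refine le_trans (abs_add_le _ _) (add_le_add ?_ ?_)
      · rw [abs_mul, abs_mul]
        have h1 : |Real.exp (-(2 * c) * η ^ 2)| = Real.exp (-(2 * c) * η ^ 2) :=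
          abs_of_nonneg (Real.exp_nonneg _)
        have h2 : |(-(2 * c) * (2 * η))| = 4 * c * η := by
          rw [abs_of_nonpos (by nlinarith)]; ring
        rw [h1, h2]
        have h4 : 0 ≤ Real.exp (-(2 * c) * η ^ 2) * (4 * c * η) :=
          mul_nonneg (Real.exp_nonneg _) (by nlinarith)
        nlinarith [mul_le_mul_of_nonneg_left (abs_cos_le_one (b * η)) h4]
      · rw [abs_mul, abs_of_nonneg (Real.exp_nonneg _)]
        have h3 : |(-Real.sin (b * η) * b)| ≤ b := by
          rw [abs_mul, abs_neg, abs_of_pos hb]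
          nlinarith [abs_sin_le_one (b * η), hb]
        nlinarith [Real.exp_nonneg (-(2 * c) * η ^ 2), h3]
    refine le_trans habs ?_
    -- now bound each piece by multiples of exp (-(c * k^2))
    have hmono : Real.exp (-(c * η ^ 2)) ≤ Real.exp (-(c * (k:ℝ) ^ 2)) := by
      apply Real.exp_le_exp.2
      have hsq : (k:ℝ) ^ 2 ≤ η ^ 2 := by nlinarith [hη.1, hk0]
      nlinarith [mul_le_mul_of_nonneg_left hsq hc.le]
    have hu : Real.sqrt c * η ≤ Real.exp (c * η ^ 2) := by
      nlinarith [Real.add_one_le_exp (c * η ^ 2), sq_nonneg (Real.sqrt c * η - 1),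
        Real.sq_sqrt hc.le, sq_nonneg η, Real.sqrt_nonneg c]
    have step1 : 4 * c * η ≤ 4 * Real.sqrt c * Real.exp (c * η ^ 2) := by
      nlinarith [hu, Real.sqrt_nonneg c, Real.sq_sqrt hc.le]
    have step3 : Real.exp (-(2 * c) * η ^ 2) * Real.exp (c * η ^ 2) = Real.exp (-(c * η ^ 2)) := by
      rw [← Real.exp_add]; congr 1; ring
    have piece1 : Real.exp (-(2 * c) * η ^ 2) * (4 * c * η)
        ≤ 4 * Real.sqrt c * Real.exp (-(c * (k:ℝ) ^ 2)) := by
      calc Real.exp (-(2 * c) * η ^ 2) * (4 * c * η)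
          ≤ Real.exp (-(2 * c) * η ^ 2) * (4 * Real.sqrt c * Real.exp (c * η ^ 2)) :=
            mul_le_mul_of_nonneg_left step1 (Real.exp_nonneg _)
        _ = 4 * Real.sqrt c * Real.exp (-(c * η ^ 2)) := by rw [← step3]; ring
        _ ≤ 4 * Real.sqrt c * Real.exp (-(c * (k:ℝ) ^ 2)) := by
            apply mul_le_mul_of_nonneg_left hmono (by positivity)
    have piece2 : Real.exp (-(2 * c) * η ^ 2) * b ≤ b * Real.exp (-(c * (k:ℝ) ^ 2)) := by
      have : Real.exp (-(2 * c) * η ^ 2) ≤ Real.exp (-(c * η ^ 2)) := by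
        apply Real.exp_le_exp.2; nlinarith [sq_nonneg η]
      calc Real.exp (-(2 * c) * η ^ 2) * b ≤ Real.exp (-(c * η ^ 2)) * b :=
            mul_le_mul_of_nonneg_right this hb.le
        _ ≤ Real.exp (-(c * (k:ℝ) ^ 2)) * b := mul_le_mul_of_nonneg_right hmono hb.le
        _ = b * Real.exp (-(c * (k:ℝ) ^ 2)) := by ring
    calc _ ≤ 4 * Real.sqrt c * Real.exp (-(c * (k:ℝ) ^ 2)) + b * Real.exp (-(c * (k:ℝ) ^ 2)) :=
          add_le_add piece1 piece2
      _ = (4 * Real.sqrt c + b) * Real.exp (-(c * (k:ℝ) ^ 2)) := by ring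
  -- sup bound
  have hsup : ∀ k : ℕ,
      (⨆ η ∈ Set.Icc (k : ℝ) ((k : ℝ) + 1),
        |deriv (fun y : ℝ =>
          Real.exp (-2 * τ * ν * π ^ 2 * y ^ 2 / L ^ 2) * Real.cos (π * y * r / L)) η|)
      ≤ (4 * Real.sqrt c + b) * Real.exp (-(c * (k : ℝ) ^ 2)) := by
    intro k
    rw [hfun]
    apply Real.iSup_le
    · intro η
      apply Real.iSup_le
      · intro hη
        exact hptwise k η hη
      · positivity
    · positivity
  -- summability of majorant
  have hsum_exp : Summable (fun k : ℕ => Real.exp (-(c * (k : ℝ) ^ 2))) := by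
    refine Summable.of_nonneg_of_le (fun k => Real.exp_nonneg _) (fun k => ?_)
      (summable_geometric_of_lt_one (Real.exp_nonneg (-c)) (Real.exp_lt_one_iff.2 (by linarith)))
    rw [← Real.exp_nat_mul]
    apply Real.exp_le_exp.2
    have : (1:ℝ) ≤ (k:ℝ) ∨ (k:ℝ) = 0 := by
      rcases Nat.eq_zero_or_pos k with h | h
      · right; simp [h]
      · left; exact_mod_cast h
    rcases this with h | h
    · nlinarith [mul_le_mul_of_nonneg_left h (mul_pos hc (by linarith : (0:ℝ) < (k:ℝ))).le]
    · rw [h]; norm_num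
  have hsum_g : Summable (fun k : ℕ => (4 * Real.sqrt c + b) * Real.exp (-(c * (k : ℝ) ^ 2))) :=
    hsum_exp.mul_left _
  have hS_nonneg : ∀ k : ℕ, 0 ≤ ⨆ η ∈ Set.Icc (k : ℝ) ((k : ℝ) + 1),
      |deriv (fun y : ℝ =>
        Real.exp (-2 * τ * ν * π ^ 2 * y ^ 2 / L ^ 2) * Real.cos (π * y * r / L)) η| := by
    intro k
    apply Real.iSup_nonneg
    intro η
    apply Real.iSup_nonneg
    intro _
    positivity
  have hS_summable : Summable (fun k : ℕ => ⨆ η ∈ Set.Icc (k : ℝ) ((k : ℝ) + 1),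
      |deriv (fun y : ℝ =>
        Real.exp (-2 * τ * ν * π ^ 2 * y ^ 2 / L ^ 2) * Real.cos (π * y * r / L)) η|) :=
    Summable.of_nonneg_of_le hS_nonneg hsup hsum_g
  calc _ ≤ ∑' k : ℕ, (4 * Real.sqrt c + b) * Real.exp (-(c * (k : ℝ) ^ 2)) :=
        Summable.tsum_le_tsum hsup hS_summable hsum_g
    _ = (4 * Real.sqrt c + b) * ∑' k : ℕ, Real.exp (-(c * (k : ℝ) ^ 2)) := tsum_mul_left
    _ ≤ (4 * Real.sqrt c + b) * (1 + 1 / Real.sqrt c) := by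
        apply mul_le_mul_of_nonneg_left (gauss_sum_le c hc) (by positivity)



lemma final_cmp (t ν L r : ℝ) (ht : 0 < t) (hν : 0 < ν) (hL : 0 < L) (hr : 0 < r) :
    (4 * π * Real.sqrt ν / L) * (2/3 * t ^ ((3:ℝ)/2)) + (4 + π * r / L) * t
      + (r / Real.sqrt ν) * (2 * t ^ ((1:ℝ)/2))
    ≤ 10 * (1 / L) * Real.sqrt (t / ν) * (r + Real.sqrt (t * ν)) * (L + Real.sqrt (t * ν)) := by
  have hs : 0 < Real.sqrt t := Real.sqrt_pos.2 ht
  have hw : 0 < Real.sqrt ν := Real.sqrt_pos.2 hν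
  set s := Real.sqrt t with hs_def
  set w := Real.sqrt ν with hw_def
  have h12 : t ^ ((1:ℝ)/2) = s := (Real.sqrt_eq_rpow t).symm
  have h32 : t ^ ((3:ℝ)/2) = s ^ 3 := by
    rw [show (3:ℝ)/2 = (1/2 : ℝ) * (3:ℕ) by norm_num, Real.rpow_mul ht.le,
      Real.rpow_natCast, ← h12]
  have ht2 : t = s ^ 2 := (Real.sq_sqrt ht.le).symm
  have hdiv : Real.sqrt (t / ν) = s / w := Real.sqrt_div ht.le ν
  have hmul : Real.sqrt (t * ν) = s * w := Real.sqrt_mul ht.le ν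
  rw [h12, h32, hdiv, hmul]
  rw [show (4 + π * r / L) * t = 4 * s^2 + π * r / L * s^2 by rw [ht2]; ring]
  have expand : 10 * (1 / L) * (s / w) * (r + s * w) * (L + s * w)
      = 10 * (r * s / w) + 10 * (r * s ^ 2 / L) + 10 * s ^ 2 + 10 * (s ^ 3 * w / L) := by
    field_simp
    ring
  rw [expand]
  have e1 : 4 * π * w / L * (2/3 * s ^ 3) ≤ 10 * (s ^ 3 * w / L) := by
    have hpi : 4 * π * (2/3) ≤ 10 := by nlinarith [Real.pi_lt_d2]
    calc 4 * π * w / L * (2/3 * s ^ 3) = (4 * π * (2/3)) * (s ^ 3 * w / L) := by ring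
      _ ≤ 10 * (s ^ 3 * w / L) := mul_le_mul_of_nonneg_right hpi (by positivity)
  have e2 : 4 * s ^ 2 ≤ 10 * s ^ 2 := by nlinarith [sq_nonneg s]
  have e3 : π * r / L * s ^ 2 ≤ 10 * (r * s ^ 2 / L) := by
    have hpi : π ≤ 10 := by nlinarith [Real.pi_lt_d2]
    calc π * r / L * s ^ 2 = π * (r * s ^ 2 / L) := by ring
      _ ≤ 10 * (r * s ^ 2 / L) := mul_le_mul_of_nonneg_right hpi (by positivity)
  have e4 : r / w * (2 * s) ≤ 10 * (r * s / w) := by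
    calc r / w * (2 * s) = 2 * (r * s / w) := by ring
      _ ≤ 10 * (r * s / w) := mul_le_mul_of_nonneg_right (by norm_num) (by positivity)
  linarith


/-- Key error estimate: the time integral of the series of derivative suprema of the
Gaussian-cosine summands is bounded by `C * (1/L) * √(t/ν) * (r + √(tν)) * (L + √(tν))`. -/
theorem integral_sum_deriv_sup_bound :
    ∃ C : ℝ, 0 < C ∧ ∀ t ν L r : ℝ, 0 < t → 0 < ν → 0 < L → 0 < r →
      (∫ τ in Set.Ioc (0 : ℝ) t,
          ∑' k : ℕ, ⨆ η ∈ Set.Icc (k : ℝ) ((k : ℝ) + 1),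
            |deriv (fun y : ℝ =>
              Real.exp (-2 * τ * ν * π ^ 2 * y ^ 2 / L ^ 2) * Real.cos (π * y * r / L)) η|) ≤
        C * (1 / L) * Real.sqrt (t / ν) * (r + Real.sqrt (t * ν)) * (L + Real.sqrt (t * ν)) := by
  refine ⟨10, by norm_num, fun t ν L r ht hν hL hr => ?_⟩
  set c1 : ℝ := 4 * π * Real.sqrt ν / L with hc1
  set c2 : ℝ := 4 + π * r / L with hc2
  set c3 : ℝ := r / Real.sqrt ν with hc3
  have hw : 0 < Real.sqrt ν := Real.sqrt_pos.2 hν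
  set g : ℝ → ℝ := fun τ => c1 * τ ^ ((1:ℝ)/2) + c2 + c3 * τ ^ (-((1:ℝ)/2)) with hg
  have hI1 : IntervalIntegrable (fun x : ℝ => x ^ ((1:ℝ)/2)) volume 0 t :=
    intervalIntegral.intervalIntegrable_rpow' (by norm_num)
  have hI3 : IntervalIntegrable (fun x : ℝ => x ^ (-((1:ℝ)/2))) volume 0 t :=
    intervalIntegral.intervalIntegrable_rpow' (by norm_num)
  have hgii : IntervalIntegrable g volume 0 t :=
    ((hI1.const_mul c1).add (intervalIntegrable_const (c := c2))).add (hI3.const_mul c3)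
  have hg_int : IntegrableOn g (Set.Ioc 0 t) :=
    (intervalIntegrable_iff_integrableOn_Ioc_of_le ht.le).1 hgii
  have hg_val : (∫ τ in Set.Ioc (0:ℝ) t, g τ)
      = c1 * (2/3 * t ^ ((3:ℝ)/2)) + c2 * t + c3 * (2 * t ^ ((1:ℝ)/2)) := by
    rw [← intervalIntegral.integral_of_le ht.le]
    rw [hg]
    rw [intervalIntegral.integral_add ((hI1.const_mul c1).add (intervalIntegrable_const (c := c2)))
        (hI3.const_mul c3),
      intervalIntegral.integral_add (hI1.const_mul c1) (intervalIntegrable_const (c := c2)),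
      intervalIntegral.integral_const_mul, intervalIntegral.integral_const_mul,
      intervalIntegral.integral_const,
      integral_rpow (Or.inl (by norm_num : (-1:ℝ) < 1/2)),
      integral_rpow (Or.inl (by norm_num : (-1:ℝ) < -(1/2)))]
    rw [show (1:ℝ)/2 + 1 = 3/2 by norm_num, show -((1:ℝ)/2) + 1 = 1/2 by norm_num,
      Real.zero_rpow (by norm_num : (3:ℝ)/2 ≠ 0), Real.zero_rpow (by norm_num : (1:ℝ)/2 ≠ 0)]
    simp only [smul_eq_mul, sub_zero]
    ring
  have f_nonneg : ∀ τ : ℝ, 0 ≤ ∑' k : ℕ, ⨆ η ∈ Set.Icc (k : ℝ) ((k : ℝ) + 1),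
      |deriv (fun y : ℝ =>
        Real.exp (-2 * τ * ν * π ^ 2 * y ^ 2 / L ^ 2) * Real.cos (π * y * r / L)) η| := by
    intro τ
    apply tsum_nonneg
    intro k
    apply Real.iSup_nonneg
    intro η
    apply Real.iSup_nonneg
    intro _
    positivity
  have key : ∀ τ : ℝ, τ ∈ Set.Ioc (0:ℝ) t →
      (4 * Real.sqrt (τ * ν * π ^ 2 / L ^ 2) + π * r / L) *
        (1 + 1 / Real.sqrt (τ * ν * π ^ 2 / L ^ 2)) = g τ := by
    intro τ hτ
    have hτ0 : 0 < τ := hτ.1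
    have hsτ : 0 < Real.sqrt τ := Real.sqrt_pos.2 hτ0
    have hsqrtc : Real.sqrt (τ * ν * π ^ 2 / L ^ 2) = π * Real.sqrt τ * Real.sqrt ν / L := by
      rw [show τ * ν * π ^ 2 / L ^ 2 = (π * Real.sqrt τ * Real.sqrt ν / L) ^ 2 by
          rw [div_pow, mul_pow, mul_pow, Real.sq_sqrt hτ0.le, Real.sq_sqrt hν.le]; ring,
        Real.sqrt_sq (by positivity)]
    rw [hsqrtc, hg]
    simp only
    rw [Real.rpow_neg hτ0.le, ← Real.sqrt_eq_rpow, hc1, hc2, hc3]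
    field_simp
    ring
  have hmono := integral_mono_of_nonneg (μ := volume.restrict (Set.Ioc (0:ℝ) t))
    (Filter.Eventually.of_forall f_nonneg) hg_int ?_
  · calc _ ≤ ∫ τ in Set.Ioc (0:ℝ) t, g τ := hmono
      _ = c1 * (2/3 * t ^ ((3:ℝ)/2)) + c2 * t + c3 * (2 * t ^ ((1:ℝ)/2)) := hg_val
      _ ≤ _ := final_cmp t ν L r ht hν hL hr
  · rw [Filter.EventuallyLE, ae_restrict_iff' measurableSet_Ioc]
    filter_upwards with τ hτ
    exact le_of_le_of_eq (tsum_sup_le τ ν L r hτ.1 hν hL hr) (key τ hτ)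
end

section
/- Define the correlation series S(t,r) = ∑_{k=1}^∞ (1 − exp(−2νπ²k²t/L²))·k^{−2}·cos(πkr/L) for ν, L, t > 0 and r ∈ ℝ, and define G(x) = ∫_0^∞ (1 − e^{−2k²})/(2k²)·cos(kx) dk. Then there exists a universal constant C > 0 such that for all σ, ν, L, t, r > 0: |(σ²L/(2νπ²))·S(t,r) − (σ²/π)·√(t/ν)·G(r/√(νt))| ≤ C·σ²·L^{−2}·√(t/ν)·(r + √(tν))·(L + √(tν)). -/
open Real MeasureTheory
/-- The correlation series `S(t,r) = ∑_{k=1}^∞ (1 - e^{-2νπ²k²t/L²}) k⁻² cos (πkr/L)`. -/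
noncomputable def corrSeries (ν L t r : ℝ) : ℝ :=
  ∑' k : ℕ, (1 - Real.exp (-2 * ν * π ^ 2 * ((k : ℝ) + 1) ^ 2 * t / L ^ 2)) /
      ((k : ℝ) + 1) ^ 2 * Real.cos (π * ((k : ℝ) + 1) * r / L)

/-- The self-similar profile `G(x) = ∫_0^∞ (1 - e^{-2k²})/(2k²) cos (kx) dk`. -/
noncomputable def profileG (x : ℝ) : ℝ :=
  ∫ k in Set.Ioi (0 : ℝ), (1 - Real.exp (-2 * k ^ 2)) / (2 * k ^ 2) * Real.cos (k * x)

open Set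

set_option maxHeartbeats 1000000

noncomputable def gfun (u : ℝ) : ℝ := (1 - Real.exp (-2 * u ^ 2)) / (2 * u ^ 2)
noncomputable def ffun (x u : ℝ) : ℝ := gfun u * Real.cos (u * x)
noncomputable def gder (u : ℝ) : ℝ :=
  ((1 + 2 * u ^ 2) * Real.exp (-2 * u ^ 2) - 1) / u ^ 3
noncomputable def fder (x u : ℝ) : ℝ :=
  gder u * Real.cos (u * x) - gfun u * (Real.sin (u * x) * x)

lemma gfun_nonneg (u : ℝ) : 0 ≤ gfun u := by
  apply div_nonneg _ (by positivity)
  have : Real.exp (-2 * u ^ 2) ≤ 1 := Real.exp_le_one_iff.2 (by nlinarith [sq_nonneg u])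
  linarith

lemma gfun_le_one (u : ℝ) : gfun u ≤ 1 := by
  rcases eq_or_ne u 0 with h | h
  · simp [gfun, h]
  · have hu : 0 < 2 * u ^ 2 := by positivity
    rw [gfun, div_le_one hu]
    nlinarith [Real.add_one_le_exp (-2 * u ^ 2)]

lemma gfun_le (u : ℝ) : gfun u ≤ 2 / (1 + u ^ 2) := by
  rcases le_or_gt (u ^ 2) 1 with h | h
  · have : (1 : ℝ) ≤ 2 / (1 + u ^ 2) := by
      rw [le_div_iff₀ (by positivity)]; linarith
    exact (gfun_le_one u).trans this
  · have hu : 0 < 2 * u ^ 2 := by nlinarith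
    have h1 : gfun u ≤ 1 / (2 * u ^ 2) := by
      rw [gfun, div_le_div_iff₀ hu hu]
      have := Real.exp_pos (-2 * u ^ 2)
      nlinarith
    refine h1.trans ?_
    rw [div_le_div_iff₀ hu (by positivity)]
    nlinarith

lemma expneg_upper (u : ℝ) : (1 + 2 * u ^ 2) * Real.exp (-2 * u ^ 2) ≤ 1 := by
  have h1 : (1:ℝ) + 2 * u ^ 2 ≤ Real.exp (2 * u ^ 2) := by
    nlinarith [Real.add_one_le_exp (2 * u ^ 2)]
  have h2 : Real.exp (-2 * u ^ 2) = (Real.exp (2 * u ^ 2))⁻¹ := by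
    rw [show (-2 : ℝ) * u ^ 2 = -(2 * u ^ 2) by ring, Real.exp_neg]
  have hE := Real.exp_pos (2 * u ^ 2)
  have hip : (0:ℝ) < (Real.exp (2 * u ^ 2))⁻¹ := by positivity
  have hmul : Real.exp (2 * u ^ 2) * (Real.exp (2 * u ^ 2))⁻¹ = 1 :=
    mul_inv_cancel₀ (ne_of_gt hE)
  rw [h2]
  nlinarith [mul_nonneg (sub_nonneg.2 h1) hip.le]

lemma expneg_lower (u : ℝ) :
    1 - 4 * u ^ 4 ≤ (1 + 2 * u ^ 2) * Real.exp (-2 * u ^ 2) := by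
  have h1 : 1 - 2 * u ^ 2 ≤ Real.exp (-2 * u ^ 2) := by
    nlinarith [Real.add_one_le_exp (-2 * u ^ 2)]
  nlinarith [mul_nonneg (by positivity : (0:ℝ) ≤ 1 + 2 * u ^ 2) (sub_nonneg.2 h1),
    mul_le_mul_of_nonneg_left h1 (by positivity : (0:ℝ) ≤ 1 + 2 * u ^ 2)]

lemma abs_gder_le {u : ℝ} (hu : 0 < u) : |gder u| ≤ 8 / (1 + u ^ 2) := by
  have key1 : |(1 + 2 * u ^ 2) * Real.exp (-2 * u ^ 2) - 1| ≤ 1 := by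
    rw [abs_le]
    refine ⟨?_, by nlinarith [expneg_upper u]⟩
    nlinarith [Real.exp_pos (-2 * u ^ 2), sq_nonneg u]
  have key2 : |(1 + 2 * u ^ 2) * Real.exp (-2 * u ^ 2) - 1| ≤ 4 * u ^ 4 := by
    rw [abs_le]
    exact ⟨by nlinarith [expneg_lower u], by nlinarith [expneg_upper u, sq_nonneg (u ^ 2)]⟩
  have hgder : |gder u| = |(1 + 2 * u ^ 2) * Real.exp (-2 * u ^ 2) - 1| / u ^ 3 := by
    rw [gder, abs_div, abs_of_pos (by positivity : (0:ℝ) < u ^ 3)]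
  rw [hgder]
  rcases le_or_gt u 1 with h | h
  · have h1 : |(1 + 2 * u ^ 2) * Real.exp (-2 * u ^ 2) - 1| / u ^ 3 ≤ 4 * u := by
      rw [div_le_iff₀ (by positivity)]
      calc _ ≤ 4 * u ^ 4 := key2
        _ = 4 * u * u ^ 3 := by ring
    refine h1.trans ?_
    rw [le_div_iff₀ (by positivity)]
    nlinarith
  · have h1 : |(1 + 2 * u ^ 2) * Real.exp (-2 * u ^ 2) - 1| / u ^ 3 ≤ 1 / u ^ 3 := by
      gcongr
    refine h1.trans ?_
    rw [div_le_div_iff₀ (by positivity) (by positivity)]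
    nlinarith

lemma hasDerivAt_gfun {u : ℝ} (hu : u ≠ 0) : HasDerivAt gfun (gder u) u := by
  have hn : HasDerivAt (fun v : ℝ => 1 - Real.exp (-2 * v ^ 2))
      (4 * u * Real.exp (-2 * u ^ 2)) u := by
    have h1 : HasDerivAt (fun v : ℝ => -2 * v ^ 2) (-4 * u) u := by
      have := (hasDerivAt_pow 2 u).const_mul (-2 : ℝ)
      simpa using this.congr_deriv (by ring)
    have h2 := (Real.hasDerivAt_exp (-2 * u ^ 2)).comp u h1
    have h3 := h2.const_sub 1
    refine h3.congr_deriv ?_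
    ring
  have hd : HasDerivAt (fun v : ℝ => 2 * v ^ 2) (4 * u) u := by
    have := (hasDerivAt_pow 2 u).const_mul (2 : ℝ)
    simpa using this.congr_deriv (by ring)
  have hdne : 2 * u ^ 2 ≠ 0 := by positivity
  have := hn.div hd hdne
  refine this.congr_deriv ?_
  rw [gder]
  field_simp
  ring

lemma hasDerivAt_ffun {x u : ℝ} (hu : u ≠ 0) : HasDerivAt (ffun x) (fder x u) u := by
  have hc : HasDerivAt (fun v : ℝ => Real.cos (v * x)) (-Real.sin (u * x) * x) u := by
    have h1 : HasDerivAt (fun v : ℝ => v * x) x u := hasDerivAt_mul_const x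
    refine ((Real.hasDerivAt_cos (u * x)).comp u h1).congr_deriv ?_; ring
  have := (hasDerivAt_gfun hu).mul hc
  refine this.congr_deriv ?_
  rw [fder]
  ring

lemma abs_fder_le {x u : ℝ} (hx : 0 ≤ x) (hu : 0 < u) :
    |fder x u| ≤ (8 + 2 * x) / (1 + u ^ 2) := by
  have h1 : |fder x u| ≤ |gder u| * 1 + gfun u * (1 * x) := by
    rw [fder]
    refine (abs_sub _ _).trans ?_
    gcongr
    · rw [abs_mul]
      gcongr
      exact Real.abs_cos_le_one _
    · rw [abs_mul, abs_of_nonneg (gfun_nonneg u), abs_mul, abs_of_nonneg hx]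
      gcongr
      · exact gfun_nonneg u
      · exact Real.abs_sin_le_one _
  refine h1.trans ?_
  have h2 := abs_gder_le hu
  have h3 := gfun_le u
  have hden : (0:ℝ) < 1 + u ^ 2 := by positivity
  have heq : (8 + 2 * x) / (1 + u ^ 2) = 8 / (1 + u ^ 2) + (2 / (1 + u ^ 2)) * x := by
    field_simp
  rw [heq]
  have h4 : gfun u * (1 * x) ≤ 2 / (1 + u ^ 2) * x := by
    rw [one_mul]
    exact mul_le_mul_of_nonneg_right h3 hx
  linarith

lemma measurable_ffun (x : ℝ) : Measurable (ffun x) := by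
  unfold ffun gfun
  exact ((measurable_const.sub (Real.measurable_exp.comp
      (measurable_const.mul (measurable_id.pow_const 2)))).div
      (measurable_const.mul (measurable_id.pow_const 2))).mul
    (Real.measurable_cos.comp (measurable_id.mul_const x))

lemma abs_ffun_le (x u : ℝ) : |ffun x u| ≤ 2 * (1 + u ^ 2)⁻¹ := by
  rw [ffun, abs_mul]
  calc |gfun u| * |Real.cos (u * x)| ≤ (2 / (1 + u ^ 2)) * 1 :=
        mul_le_mul (by rw [abs_of_nonneg (gfun_nonneg u)]; exact gfun_le u)
          (Real.abs_cos_le_one _) (abs_nonneg _) (by positivity)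
    _ = 2 * (1 + u ^ 2)⁻¹ := by rw [mul_one, div_eq_mul_inv]

lemma integrable_ffun (x : ℝ) : Integrable (ffun x) := by
  refine (integrable_inv_one_add_sq.const_mul 2).mono'
    (measurable_ffun x).aestronglyMeasurable ?_
  filter_upwards with u
  rw [Real.norm_eq_abs]
  exact abs_ffun_le x u

lemma summable_inv_sq : Summable (fun k : ℕ => 1 / ((k : ℝ) + 1) ^ 2) := by
  have h := summable_one_div_nat_pow.2 (by norm_num : 1 < 2)
  have := (summable_nat_add_iff (f := fun n : ℕ => 1 / (n : ℝ) ^ 2) 1).2 h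
  simpa [Nat.cast_add] using this

lemma iUnion_Ioc_h {h : ℝ} (hh : 0 < h) :
    (⋃ k : ℕ, Ioc ((k : ℝ) * h) (((k : ℝ) + 1) * h)) = Ioi 0 := by
  ext u
  simp only [mem_iUnion, mem_Ioc, mem_Ioi]
  constructor
  · rintro ⟨k, h1, h2⟩
    have : (0:ℝ) ≤ (k:ℝ) * h := by positivity
    linarith
  · intro hu
    have hq : 0 < u / h := div_pos hu hh
    have hn1 : 1 ≤ ⌈u / h⌉₊ := Nat.one_le_iff_ne_zero.2 (by
      simp only [ne_eq, Nat.ceil_eq_zero, not_le]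
      exact hq)
    refine ⟨⌈u / h⌉₊ - 1, ?_, ?_⟩
    · have hcast : ((⌈u / h⌉₊ - 1 : ℕ) : ℝ) = (⌈u / h⌉₊ : ℝ) - 1 := by
        rw [Nat.cast_sub hn1]; simp
      rw [hcast]
      have hc := Nat.ceil_lt_add_one hq.le
      have h2 : ((⌈u / h⌉₊ : ℝ) - 1) < u / h := by linarith
      calc ((⌈u / h⌉₊ : ℝ) - 1) * h < (u / h) * h := by
            exact mul_lt_mul_of_pos_right h2 hh
        _ = u := div_mul_cancel₀ u hh.ne'
    · have hcast : ((⌈u / h⌉₊ - 1 : ℕ) : ℝ) + 1 = (⌈u / h⌉₊ : ℝ) := by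
        rw [Nat.cast_sub hn1]; simp
      rw [hcast]
      have h2 := Nat.le_ceil (u / h)
      calc u = (u / h) * h := (div_mul_cancel₀ u hh.ne').symm
        _ ≤ (⌈u / h⌉₊ : ℝ) * h := mul_le_mul_of_nonneg_right h2 hh.le

lemma pairwise_disj {h : ℝ} (hh : 0 ≤ h) :
    Pairwise (Function.onFun Disjoint fun k : ℕ => Ioc ((k : ℝ) * h) (((k : ℝ) + 1) * h)) := by
  have key : ∀ i j : ℕ, i < j →
      Disjoint (Ioc ((i : ℝ) * h) (((i : ℝ) + 1) * h)) (Ioc ((j : ℝ) * h) (((j : ℝ) + 1) * h)) := by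
    intro i j hij
    rw [Set.Ioc_disjoint_Ioc]
    refine le_trans (min_le_left _ _) (le_trans ?_ (le_max_right _ _))
    have : ((i : ℝ) + 1) ≤ (j : ℝ) := by exact_mod_cast hij
    exact mul_le_mul_of_nonneg_right this hh
  intro i j hij
  rcases hij.lt_or_gt with hlt | hlt
  · exact key i j hlt
  · exact (key j i hlt).symm

lemma interval_est {x h : ℝ} (hx : 0 ≤ x) (hh : 0 < h) (k : ℕ) :
    |h * ffun x (((k : ℝ) + 1) * h) -
        ∫ u in Ioc ((k : ℝ) * h) (((k : ℝ) + 1) * h), ffun x u| ≤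
      h ^ 2 * ((8 + 2 * x) / (1 + ((k : ℝ) * h) ^ 2)) := by
  set a : ℝ := (k : ℝ) * h with ha
  set b : ℝ := ((k : ℝ) + 1) * h with hb
  have ha0 : 0 ≤ a := by positivity
  have hab : a < b := by rw [ha, hb]; nlinarith
  have hba : b - a = h := by rw [ha, hb]; ring
  set C : ℝ := (8 + 2 * x) / (1 + a ^ 2) with hC
  have hC0 : 0 ≤ C := by positivity
  -- Lipschitz bound on Ioc a b
  have hlip : ∀ u ∈ Ioc a b, ‖ffun x b - ffun x u‖ ≤ C * h := by
    intro u hu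
    have hder : ∀ v ∈ Ioc a b, HasDerivWithinAt (ffun x) (fder x v) (Ioc a b) v :=
      fun v hv => (hasDerivAt_ffun (ne_of_gt (lt_of_le_of_lt ha0 hv.1))).hasDerivWithinAt
    have hbd : ∀ v ∈ Ioc a b, ‖fder x v‖ ≤ C := by
      intro v hv
      have hv0 : 0 < v := lt_of_le_of_lt ha0 hv.1
      refine (abs_fder_le hx hv0).trans ?_
      rw [hC]
      exact div_le_div_of_nonneg_left (by linarith) (by positivity)
        (by nlinarith [hv.1.le, ha0])
    have := (convex_Ioc a b).norm_image_sub_le_of_norm_hasDerivWithin_le hder hbd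
      hu (right_mem_Ioc.2 hab)
    refine this.trans ?_
    have : ‖b - u‖ ≤ h := by
      rw [Real.norm_eq_abs, abs_of_nonneg (by linarith [hu.2] : (0:ℝ) ≤ b - u)]
      linarith [hu.1, hba]
    exact mul_le_mul_of_nonneg_left this hC0
  have hvol : volume (Ioc a b) = ENNReal.ofReal h := by
    rw [Real.volume_Ioc, hba]
  have hvlt : volume (Ioc a b) < ⊤ := by rw [hvol]; exact ENNReal.ofReal_lt_top
  have hint_f : IntegrableOn (ffun x) (Ioc a b) := (integrable_ffun x).integrableOn
  have hint_c : IntegrableOn (fun _ : ℝ => ffun x b) (Ioc a b) :=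
    integrableOn_const hvlt.ne
  have hsplit : ∫ u in Ioc a b, (ffun x b - ffun x u) =
      h * ffun x b - ∫ u in Ioc a b, ffun x u := by
    rw [integral_sub hint_c hint_f, setIntegral_const, measureReal_def, hvol,
      ENNReal.toReal_ofReal hh.le, smul_eq_mul]
  have hnorm : ‖∫ u in Ioc a b, (ffun x b - ffun x u)‖ ≤ (C * h) * h := by
    have := norm_setIntegral_le_of_norm_le_const hvlt hlip
    rw [measureReal_def, hvol, ENNReal.toReal_ofReal hh.le] at this
    exact this
  rw [← Real.norm_eq_abs]
  calc ‖h * ffun x b - ∫ u in Ioc a b, ffun x u‖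
      = ‖∫ u in Ioc a b, (ffun x b - ffun x u)‖ := by rw [hsplit]
    _ ≤ (C * h) * h := hnorm
    _ = h ^ 2 * C := by ring

lemma riemann_est {x h : ℝ} (hx : 0 ≤ x) (hh : 0 < h) :
    |h * ∑' k : ℕ, ffun x (((k : ℝ) + 1) * h) - ∫ u in Ioi (0:ℝ), ffun x u| ≤
      (8 + 2 * x) * (h ^ 2 + h * (π / 2)) := by
  have hx8 : (0:ℝ) < 8 + 2 * x := by linarith
  set ψ : ℕ → ℝ := fun k => h ^ 2 * ((8 + 2 * x) / (1 + ((k : ℝ) * h) ^ 2)) with hψdef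
  have hsum_int : HasSum (fun k : ℕ => ∫ u in Ioc ((k : ℝ) * h) (((k : ℝ) + 1) * h), ffun x u)
      (∫ u in Ioi (0:ℝ), ffun x u) := by
    have := hasSum_integral_iUnion (μ := volume) (f := ffun x)
      (s := fun k : ℕ => Ioc ((k : ℝ) * h) (((k : ℝ) + 1) * h))
      (fun k => measurableSet_Ioc) (pairwise_disj hh.le)
      (by rw [iUnion_Ioc_h hh]; exact (integrable_ffun x).integrableOn)
    rwa [iUnion_Ioc_h hh] at this
  have hsumf : Summable (fun k : ℕ => ffun x (((k : ℝ) + 1) * h)) := by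
    apply Summable.of_abs
    refine Summable.of_nonneg_of_le (fun k => abs_nonneg _)
      (fun k => ?_) (summable_inv_sq.mul_left (2 / h ^ 2))
    refine (abs_ffun_le x _).trans ?_
    have hK : (0:ℝ) < (k : ℝ) + 1 := by positivity
    calc 2 * (1 + (((k : ℝ) + 1) * h) ^ 2)⁻¹ ≤ 2 * ((((k : ℝ) + 1) * h) ^ 2)⁻¹ :=
          mul_le_mul_of_nonneg_left
            (inv_anti₀ (by positivity) (by nlinarith)) (by norm_num)
      _ = 2 / h ^ 2 * (1 / ((k : ℝ) + 1) ^ 2) := by field_simp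
  have hψsum : Summable ψ := by
    refine (summable_nat_add_iff 1).mp ?_
    refine Summable.of_nonneg_of_le (fun k => by positivity) (fun k => ?_)
      (summable_inv_sq.mul_left (8 + 2 * x))
    have hK : (0:ℝ) < (k : ℝ) + 1 := by positivity
    have hcast : (((k + 1 : ℕ) : ℝ)) = (k : ℝ) + 1 := by push_cast; ring
    show h ^ 2 * ((8 + 2 * x) / (1 + (((k + 1 : ℕ) : ℝ) * h) ^ 2)) ≤ _
    rw [hcast]
    calc h ^ 2 * ((8 + 2 * x) / (1 + (((k : ℝ) + 1) * h) ^ 2))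
        ≤ h ^ 2 * ((8 + 2 * x) / ((((k : ℝ) + 1) * h) ^ 2)) := by
          refine mul_le_mul_of_nonneg_left ?_ (by positivity)
          exact div_le_div_of_nonneg_left hx8.le (by positivity) (by nlinarith)
      _ = (8 + 2 * x) * (1 / ((k : ℝ) + 1) ^ 2) := by field_simp
  have hdiffsum : Summable (fun k : ℕ =>
      h * ffun x (((k : ℝ) + 1) * h) -
        ∫ u in Ioc ((k : ℝ) * h) (((k : ℝ) + 1) * h), ffun x u) :=
    (hsumf.mul_left h).sub hsum_int.summable
  have heq : h * (∑' k : ℕ, ffun x (((k : ℝ) + 1) * h)) - ∫ u in Ioi (0:ℝ), ffun x u =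
      ∑' k : ℕ, (h * ffun x (((k : ℝ) + 1) * h) -
        ∫ u in Ioc ((k : ℝ) * h) (((k : ℝ) + 1) * h), ffun x u) := by
    rw [Summable.tsum_sub (hsumf.mul_left h) hsum_int.summable, tsum_mul_left, hsum_int.tsum_eq]
  rw [heq]
  have step1 : |∑' k : ℕ, (h * ffun x (((k : ℝ) + 1) * h) -
      ∫ u in Ioc ((k : ℝ) * h) (((k : ℝ) + 1) * h), ffun x u)| ≤ ∑' k : ℕ, ψ k := by
    have hns : Summable (fun k : ℕ => ‖h * ffun x (((k : ℝ) + 1) * h) -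
        ∫ u in Ioc ((k : ℝ) * h) (((k : ℝ) + 1) * h), ffun x u‖) := by
      simpa [Real.norm_eq_abs] using hdiffsum.abs
    calc |∑' k : ℕ, (h * ffun x (((k : ℝ) + 1) * h) -
          ∫ u in Ioc ((k : ℝ) * h) (((k : ℝ) + 1) * h), ffun x u)|
        = ‖∑' k : ℕ, (h * ffun x (((k : ℝ) + 1) * h) -
          ∫ u in Ioc ((k : ℝ) * h) (((k : ℝ) + 1) * h), ffun x u)‖ := (Real.norm_eq_abs _).symm
      _ ≤ ∑' k : ℕ, ‖h * ffun x (((k : ℝ) + 1) * h) -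
          ∫ u in Ioc ((k : ℝ) * h) (((k : ℝ) + 1) * h), ffun x u‖ := norm_tsum_le_tsum_norm hns
      _ ≤ ∑' k : ℕ, ψ k := Summable.tsum_le_tsum
          (fun k => by rw [Real.norm_eq_abs]; exact interval_est hx hh k) hns hψsum
  refine step1.trans ?_
  -- bound the tail sum
  have hΨint : Integrable (fun u : ℝ => (8 + 2 * x) * (1 + u ^ 2)⁻¹) :=
    integrable_inv_one_add_sq.const_mul _
  have hΨsum_int : HasSum (fun k : ℕ =>
      ∫ u in Ioc ((k : ℝ) * h) (((k : ℝ) + 1) * h), (8 + 2 * x) * (1 + u ^ 2)⁻¹)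
      (∫ u in Ioi (0:ℝ), (8 + 2 * x) * (1 + u ^ 2)⁻¹) := by
    have := hasSum_integral_iUnion (μ := volume)
      (f := fun u : ℝ => (8 + 2 * x) * (1 + u ^ 2)⁻¹)
      (s := fun k : ℕ => Ioc ((k : ℝ) * h) (((k : ℝ) + 1) * h))
      (fun k => measurableSet_Ioc) (pairwise_disj hh.le)
      (by rw [iUnion_Ioc_h hh]; exact hΨint.integrableOn)
    rwa [iUnion_Ioc_h hh] at this
  have hΨval : (∫ u in Ioi (0:ℝ), (8 + 2 * x) * (1 + u ^ 2)⁻¹) = (8 + 2 * x) * (π / 2) := by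
    rw [MeasureTheory.integral_const_mul, integral_Ioi_inv_one_add_sq, Real.arctan_zero, sub_zero]
  have hψk : ∀ k : ℕ, ψ (k + 1) ≤
      h * ∫ u in Ioc ((k : ℝ) * h) (((k : ℝ) + 1) * h), (8 + 2 * x) * (1 + u ^ 2)⁻¹ := by
    intro k
    have hb0 : (0:ℝ) < ((k : ℝ) + 1) * h := by positivity
    have hconst : h * ((8 + 2 * x) * (1 + (((k : ℝ) + 1) * h) ^ 2)⁻¹) =
        ∫ u in Ioc ((k : ℝ) * h) (((k : ℝ) + 1) * h),
          (8 + 2 * x) * (1 + (((k : ℝ) + 1) * h) ^ 2)⁻¹ := by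
      rw [setIntegral_const, measureReal_def, Real.volume_Ioc, smul_eq_mul]
      congr 1
      rw [show ((k : ℝ) + 1) * h - (k : ℝ) * h = h by ring, ENNReal.toReal_ofReal hh.le]
    have hle : (∫ u in Ioc ((k : ℝ) * h) (((k : ℝ) + 1) * h),
          (8 + 2 * x) * (1 + (((k : ℝ) + 1) * h) ^ 2)⁻¹) ≤
        ∫ u in Ioc ((k : ℝ) * h) (((k : ℝ) + 1) * h), (8 + 2 * x) * (1 + u ^ 2)⁻¹ := by
      refine setIntegral_mono_on (integrableOn_const ?_)
        hΨint.integrableOn measurableSet_Ioc (fun u hu => ?_)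
      · rw [Real.volume_Ioc]; exact ENNReal.ofReal_lt_top.ne
      · refine mul_le_mul_of_nonneg_left (inv_anti₀ (by positivity) ?_) hx8.le
        have hu0 : 0 ≤ u := le_of_lt (lt_of_le_of_lt (by positivity) hu.1)
        nlinarith [hu.2, hu0]
    have hψval : ψ (k + 1) = h * (h * ((8 + 2 * x) * (1 + (((k : ℝ) + 1) * h) ^ 2)⁻¹)) := by
      rw [hψdef]
      push_cast
      field_simp
    rw [hψval, hconst]
    exact mul_le_mul_of_nonneg_left hle hh.le
  have htail : ∑' k : ℕ, ψ (k + 1) ≤ h * ((8 + 2 * x) * (π / 2)) := by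
    calc ∑' k : ℕ, ψ (k + 1)
        ≤ ∑' k : ℕ, h * ∫ u in Ioc ((k : ℝ) * h) (((k : ℝ) + 1) * h),
            (8 + 2 * x) * (1 + u ^ 2)⁻¹ :=
          Summable.tsum_le_tsum hψk ((summable_nat_add_iff 1).mpr hψsum)
            (hΨsum_int.summable.mul_left h)
      _ = h * ((8 + 2 * x) * (π / 2)) := by rw [tsum_mul_left, hΨsum_int.tsum_eq, hΨval]
  have hfirst : ψ 0 = (8 + 2 * x) * h ^ 2 := by
    rw [hψdef]; norm_num; ring
  calc ∑' k : ℕ, ψ k = ψ 0 + ∑' k : ℕ, ψ (k + 1) := Summable.tsum_eq_zero_add hψsum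
    _ ≤ (8 + 2 * x) * h ^ 2 + h * ((8 + 2 * x) * (π / 2)) := by
        rw [hfirst]; linarith [htail]
    _ = (8 + 2 * x) * (h ^ 2 + h * (π / 2)) := by ring

/-- The averaged mean correlation function `(σ²L/(2νπ²)) S(t,r)` is approximated by the
self-similar profile `(σ²/π) √(t/ν) G(r/√(νt))` up to an error of order
`σ² L⁻² √(t/ν) (r + √(tν)) (L + √(tν))`. -/
theorem correlation_selfsimilar_approx :
    ∃ C : ℝ, 0 < C ∧ ∀ σ ν L t r : ℝ, 0 < σ → 0 < ν → 0 < L → 0 < t → 0 < r →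
      |σ ^ 2 * L / (2 * ν * π ^ 2) * corrSeries ν L t r -
          σ ^ 2 / π * Real.sqrt (t / ν) * profileG (r / Real.sqrt (ν * t))| ≤
        C * σ ^ 2 * L⁻¹ ^ 2 * Real.sqrt (t / ν) *
          (r + Real.sqrt (t * ν)) * (L + Real.sqrt (t * ν)) := by
  refine ⟨100, by norm_num, fun σ ν L t r hσ hν hL ht hr => ?_⟩
  have hπ := Real.pi_pos
  obtain ⟨s, hsdef⟩ : ∃ s' : ℝ, s' = Real.sqrt (ν * t) := ⟨_, rfl⟩
  have hs : 0 < s := hsdef ▸ Real.sqrt_pos.2 (by positivity)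
  have hs2 : s ^ 2 = ν * t := by rw [hsdef]; exact Real.sq_sqrt (by positivity)
  obtain ⟨x, hxdef⟩ : ∃ x' : ℝ, x' = r / s := ⟨_, rfl⟩
  have hx : 0 < x := by rw [hxdef]; positivity
  obtain ⟨h, hhdef⟩ : ∃ h' : ℝ, h' = π * s / L := ⟨_, rfl⟩
  have hh : 0 < h := by rw [hhdef]; positivity
  -- rewrite the square roots
  have hsqrt1 : Real.sqrt (t / ν) = s / ν := by
    have h1 : (s / ν) ^ 2 = t / ν := by
      rw [div_pow, hs2]; field_simp
    rw [← h1, Real.sqrt_sq (by positivity)]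
  have hsqrt2 : Real.sqrt (t * ν) = s := by rw [hsdef, mul_comm]
  rw [← hsdef, hsqrt1, hsqrt2, show r / s = x from hxdef.symm]
  -- the series in terms of ffun
  have hseries : corrSeries ν L t r = 2 * h ^ 2 * ∑' k : ℕ, ffun x (((k : ℝ) + 1) * h) := by
    rw [corrSeries, ← tsum_mul_left]
    apply tsum_congr
    intro k
    have hK : (0:ℝ) < (k : ℝ) + 1 := by positivity
    have hKh2 : (((k : ℝ) + 1) * h) ^ 2 = ((k : ℝ) + 1) ^ 2 * π ^ 2 * (ν * t) / L ^ 2 := by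
      rw [hhdef, ← hs2]
      field_simp
    have harg : -2 * ν * π ^ 2 * ((k : ℝ) + 1) ^ 2 * t / L ^ 2 =
        -2 * ((((k : ℝ) + 1) * h) ^ 2) := by
      rw [hKh2]; ring
    have hcos : π * ((k : ℝ) + 1) * r / L = (((k : ℝ) + 1) * h) * x := by
      rw [hhdef, hxdef]
      field_simp
    rw [harg, hcos, ffun, gfun]
    have hKh : ((k : ℝ) + 1) * h ≠ 0 := by positivity
    field_simp
  have hprofile : profileG x = ∫ u in Ioi (0:ℝ), ffun x u := rfl
  -- main algebraic identity
  have hkey : σ ^ 2 * L / (2 * ν * π ^ 2) * corrSeries ν L t r -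
      σ ^ 2 / π * (s / ν) * profileG x =
      (σ ^ 2 * s / (π * ν)) *
        (h * (∑' k : ℕ, ffun x (((k : ℝ) + 1) * h)) - ∫ u in Ioi (0:ℝ), ffun x u) := by
    rw [hseries, hprofile, hhdef]
    field_simp
  rw [hkey, abs_mul, abs_of_pos (by positivity : (0:ℝ) < σ ^ 2 * s / (π * ν))]
  have hrest := riemann_est (x := x) (h := h) hx.le hh
  calc σ ^ 2 * s / (π * ν) *
        |h * (∑' k : ℕ, ffun x (((k : ℝ) + 1) * h)) - ∫ u in Ioi (0:ℝ), ffun x u|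
      ≤ σ ^ 2 * s / (π * ν) * ((8 + 2 * x) * (h ^ 2 + h * (π / 2))) :=
        mul_le_mul_of_nonneg_left hrest (by positivity)
    _ ≤ 100 * σ ^ 2 * L⁻¹ ^ 2 * (s / ν) * (r + s) * (L + s) := by
        rw [hxdef, hhdef]
        have heq1 : σ ^ 2 * s / (π * ν) *
            ((8 + 2 * (r / s)) * ((π * s / L) ^ 2 + (π * s / L) * (π / 2))) =
            σ ^ 2 * (π * ((8 * s + 2 * r) * (s * (2 * s + L)))) / (2 * (ν * L ^ 2)) := by
          field_simp
        have heq2 : 100 * σ ^ 2 * L⁻¹ ^ 2 * (s / ν) * (r + s) * (L + s) =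
            σ ^ 2 * (100 * (s * ((r + s) * (L + s)))) / (ν * L ^ 2) := by
          field_simp
        rw [heq1, heq2, div_le_div_iff₀ (by positivity) (by positivity)]
        have hinner : π * ((8 * s + 2 * r) * (s * (2 * s + L))) ≤
            200 * (s * ((r + s) * (L + s))) := by
          nlinarith [Real.pi_le_four, mul_pos hr hs, mul_pos hs hL, mul_pos hr hL,
            mul_pos (mul_pos hr hs) hL, mul_pos (mul_pos hs hs) hL,
            mul_pos (mul_pos hr hs) hs, mul_pos hs (mul_pos hs hs)]
        calc σ ^ 2 * (π * ((8 * s + 2 * r) * (s * (2 * s + L)))) * (ν * L ^ 2)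
            ≤ σ ^ 2 * (200 * (s * ((r + s) * (L + s)))) * (ν * L ^ 2) := by
              have := mul_le_mul_of_nonneg_left hinner (by positivity : (0:ℝ) ≤ σ ^ 2)
              exact mul_le_mul_of_nonneg_right this (by positivity)
          _ = σ ^ 2 * (100 * (s * ((r + s) * (L + s)))) * (2 * (ν * L ^ 2)) := by ring
end

section
/- Define S(t,r) = ∑_{k=1}^∞ (1 − exp(−2νπ²k²t/L²))·k^{−2}·cos(πkr/L) and the normalized correlation function ρ(t,r) = S(t,r)/S(t,0) for ν, L, t > 0, r ≥ 0. For every δ ∈ (0,1) there is ε₀ > 0 such that for every ε₂ ∈ (0,ε₀) there exist ε₁ > 0 and constants 0 < C₁ < C₂ < C₃, depending only on δ and ε₂, with the following property: for all ν, L > 0 and all t with 0 < t < ε₁·L²/ν, one has ρ(t,r) ≥ δ for every r ∈ [0, C₁·√(tν)], and |ρ(t,r)| < ε₂ for every r ∈ [C₂·√(tν), C₃·√(tν)]. -/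
open Real

/-- The normalized correlation function `ρ(t,r) = S(t,r)/S(t,0)`. -/
noncomputable def normCorr (ν L t r : ℝ) : ℝ :=
  corrSeries ν L t r / corrSeries ν L t 0


namespace NC

noncomputable def gg (τ : ℝ) (k : ℕ) : ℝ :=
  (1 - Real.exp (-(τ * ((k : ℝ) + 1) ^ 2))) / ((k : ℝ) + 1) ^ 2

lemma kpos (k : ℕ) : (0:ℝ) < ((k:ℝ)+1)^2 := by positivity

lemma gg_nonneg {τ : ℝ} (hτ : 0 ≤ τ) (k : ℕ) : 0 ≤ gg τ k := by
  have h : Real.exp (-(τ * ((k : ℝ) + 1) ^ 2)) ≤ 1 := by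
    rw [Real.exp_le_one_iff]; nlinarith [kpos k]
  exact div_nonneg (by linarith) (kpos k).le

lemma gg_le_inv_sq (τ : ℝ) (k : ℕ) : gg τ k ≤ 1 / ((k : ℝ) + 1) ^ 2 := by
  unfold gg
  gcongr
  · linarith [Real.exp_pos (-(τ * ((k : ℝ) + 1) ^ 2))]

lemma gg_le_tau {τ : ℝ} (hτ : 0 ≤ τ) (k : ℕ) : gg τ k ≤ τ := by
  have h : 1 - Real.exp (-(τ * ((k : ℝ) + 1) ^ 2)) ≤ τ * ((k : ℝ) + 1) ^ 2 := by
    have := Real.add_one_le_exp (-(τ * ((k : ℝ) + 1) ^ 2))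
    linarith
  have hk := kpos k
  unfold gg
  rw [div_le_iff₀ hk]
  nlinarith [Nat.cast_nonneg (α := ℝ) k]

lemma star {t v : ℝ} (ht0 : 0 ≤ t) (ht1 : t ≤ 1) :
    t * (1 - Real.exp (-v)) ≤ 1 - Real.exp (-(t*v)) := by
  have hb : (0:ℝ) ≤ 1 - t := by linarith
  have hab : t + (1 - t) = 1 := by ring
  have h := convexOn_exp.2 (Set.mem_univ (-v)) (Set.mem_univ 0) ht0 hb hab
  simp only [smul_eq_mul, mul_zero, add_zero, Real.exp_zero, mul_one] at h
  have he : t * -v = -(t*v) := by ring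
  rw [he] at h
  linarith

lemma gg_antitone {τ : ℝ} (hτ : 0 ≤ τ) (k : ℕ) : gg τ (k+1) ≤ gg τ k := by
  have hk := kpos k
  have hcast : ((k+1 : ℕ) : ℝ) = (k:ℝ) + 1 := by push_cast; ring
  have ht0 : (0:ℝ) ≤ ((k:ℝ)+1)^2 / ((k:ℝ)+2)^2 := by positivity
  have ht1 : ((k:ℝ)+1)^2 / ((k:ℝ)+2)^2 ≤ 1 := by
    rw [div_le_one (by positivity)]; nlinarith [Nat.cast_nonneg (α := ℝ) k]
  have h := star (v := τ * ((k:ℝ)+2)^2) ht0 ht1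
  have he : ((k:ℝ)+1)^2 / ((k:ℝ)+2)^2 * (τ * ((k:ℝ)+2)^2) = τ * ((k:ℝ)+1)^2 := by
    field_simp
  rw [he] at h
  rw [div_mul_eq_mul_div, div_le_iff₀ (by positivity)] at h
  unfold gg
  rw [hcast]
  have h2 : ((k:ℝ)+1) + 1 = (k:ℝ) + 2 := by ring
  rw [h2, div_le_div_iff₀ (by positivity) hk]
  nlinarith [h]

lemma summable_inv_sq : Summable (fun k : ℕ => 1 / ((k:ℝ)+1)^2) := by
  have := Real.summable_one_div_nat_pow.mpr (show 1 < 2 by norm_num)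
  have h2 := (summable_nat_add_iff 1).mpr this
  simpa [add_comm] using h2

lemma summable_gg_mul {τ : ℝ} (hτ : 0 ≤ τ) (c : ℕ → ℝ) (hc : ∀ k, |c k| ≤ 1) :
    Summable (fun k : ℕ => gg τ k * c k) := by
  apply Summable.of_abs
  apply Summable.of_nonneg_of_le (fun k => abs_nonneg _) ?_ summable_inv_sq
  intro k
  rw [abs_mul]
  calc |gg τ k| * |c k| ≤ (1 / ((k:ℝ)+1)^2) * 1 := by
        apply mul_le_mul ?_ (hc k) (abs_nonneg _) (by positivity)
        rw [abs_of_nonneg (gg_nonneg hτ k)]; exact gg_le_inv_sq τ k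
    _ = 1 / ((k:ℝ)+1)^2 := by ring

lemma summable_gg {τ : ℝ} (hτ : 0 ≤ τ) : Summable (gg τ) := by
  have := summable_gg_mul hτ (fun _ => 1) (fun k => by norm_num)
  simpa using this

lemma summable_gg_cos {τ : ℝ} (hτ : 0 ≤ τ) (a : ℝ) :
    Summable (fun k : ℕ => gg τ k * Real.cos (((k:ℝ)+1)*a)) :=
  summable_gg_mul hτ _ (fun k => Real.abs_cos_le_one _)

lemma summable_gg_one_sub_cos {τ : ℝ} (hτ : 0 ≤ τ) (a : ℝ) :
    Summable (fun k : ℕ => gg τ k * (1 - Real.cos (((k:ℝ)+1)*a))) := by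
  have h := (summable_gg hτ).sub (summable_gg_cos hτ a)
  exact h.congr (fun k => by ring)

/-- Dirichlet-type kernel telescoping identity. -/
lemma kernel_telescope (a : ℝ) (n : ℕ) :
    2 * Real.sin (a/2) * (∑ k ∈ Finset.range n, Real.cos (((k:ℝ)+1)*a))
      = Real.sin (((n:ℝ)+1/2)*a) - Real.sin (a/2) := by
  induction n with
  | zero => simp; ring_nf
  | succ n ih =>
    rw [Finset.sum_range_succ, mul_add, ih]
    push_cast
    have h1 : (((n:ℝ)+1)+1/2)*a = (((n:ℝ)+1)*a) + a/2 := by ring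
    have h2 : ((n:ℝ)+1/2)*a = (((n:ℝ)+1)*a) - a/2 := by ring
    rw [h1, h2, Real.sin_add, Real.sin_sub]
    ring

lemma kernel_bound {a : ℝ} (hs : 0 < Real.sin (a/2)) (n : ℕ) :
    |∑ k ∈ Finset.range n, Real.cos (((k:ℝ)+1)*a)| ≤ 1 / Real.sin (a/2) := by
  have h := kernel_telescope a n
  have hb : |Real.sin (((n:ℝ)+1/2)*a) - Real.sin (a/2)| ≤ 2 := by
    have := Real.abs_sin_le_one (((n:ℝ)+1/2)*a)
    have := Real.abs_sin_le_one (a/2)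
    rw [abs_sub_le_iff]
    constructor <;> cases' abs_le.mp ‹|Real.sin (a/2)| ≤ 1› with h1 h2 <;>
      cases' abs_le.mp ‹|Real.sin (((n:ℝ)+1/2)*a)| ≤ 1› with h3 h4 <;> linarith
  rw [le_div_iff₀ hs]
  calc |∑ k ∈ Finset.range n, Real.cos (((k:ℝ)+1)*a)| * Real.sin (a/2)
      = |2 * Real.sin (a/2) * (∑ k ∈ Finset.range n, Real.cos (((k:ℝ)+1)*a))| / 2 := by
        rw [abs_mul, abs_mul, abs_of_nonneg hs.le, abs_two]; ring
    _ ≤ 2 / 2 := by rw [h]; linarith [hb]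
    _ = 1 := by norm_num

lemma abel_partial {τ a : ℝ} (hτ : 0 ≤ τ) (hs : 0 < Real.sin (a/2)) (n : ℕ) :
    |∑ k ∈ Finset.range n, gg τ k * Real.cos (((k:ℝ)+1)*a)| ≤ gg τ 0 / Real.sin (a/2) := by
  have ggnn := gg_nonneg hτ
  have ggmono := gg_antitone hτ
  have kb := kernel_bound hs
  rcases Nat.eq_zero_or_pos n with rfl | hn
  · simpa using div_nonneg (ggnn 0) hs.le
  set M := 1 / Real.sin (a/2) with hM
  have hM0 : 0 ≤ M := by positivity
  have h := Finset.sum_range_by_parts (fun k => gg τ k) (fun k => Real.cos (((k:ℝ)+1)*a)) n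
  simp only [smul_eq_mul] at h
  rw [h]
  have habs : |gg τ (n-1) * (∑ j ∈ Finset.range n, Real.cos (((j:ℝ)+1)*a))
      - ∑ i ∈ Finset.range (n-1), (gg τ (i+1) - gg τ i) * (∑ j ∈ Finset.range (i+1), Real.cos (((j:ℝ)+1)*a))|
      ≤ gg τ (n-1) * M + ∑ i ∈ Finset.range (n-1), (gg τ i - gg τ (i+1)) * M := by
    apply (abs_sub _ _).trans
    gcongr
    · rw [abs_mul, abs_of_nonneg (ggnn _)]
      exact mul_le_mul_of_nonneg_left (kb n) (ggnn _)
    · apply (Finset.abs_sum_le_sum_abs _ _).trans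
      apply Finset.sum_le_sum
      intro i _
      rw [abs_mul, abs_sub_comm, abs_of_nonneg (by linarith [ggmono i])]
      exact mul_le_mul_of_nonneg_left (kb (i+1)) (by linarith [ggmono i])
  apply habs.trans
  have htel : ∑ i ∈ Finset.range (n-1), (gg τ i - gg τ (i+1)) = gg τ 0 - gg τ (n-1) :=
    Finset.sum_range_sub' (fun k => gg τ k) (n-1)
  rw [← Finset.sum_mul, htel]
  have : gg τ (n-1) * M + (gg τ 0 - gg τ (n-1)) * M = gg τ 0 * M := by ring
  rw [this, hM, mul_one_div]

lemma abs_tsum_le_of_partial {f : ℕ → ℝ} {C : ℝ} (hf : Summable f)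
    (h : ∀ n, |∑ k ∈ Finset.range n, f k| ≤ C) : |∑' k, f k| ≤ C := by
  have ht := hf.hasSum.tendsto_sum_nat
  exact le_of_tendsto ht.abs (Filter.Eventually.of_forall h)

/-- Abel bound for the full series. -/
lemma abel_tsum {τ a : ℝ} (hτ : 0 ≤ τ) (hs : 0 < Real.sin (a/2)) :
    |∑' k : ℕ, gg τ k * Real.cos (((k:ℝ)+1)*a)| ≤ τ / Real.sin (a/2) := by
  have h1 := abs_tsum_le_of_partial (summable_gg_cos hτ a) (abel_partial hτ hs)
  apply h1.trans
  gcongr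
  exact gg_le_tau hτ 0

lemma tail_inv_sq {K : ℕ} (hK : 1 ≤ K) :
    ∑' k : ℕ, 1 / (((k:ℝ)+(K:ℝ)+1)^2) ≤ 1 / (K:ℝ) := by
  have hKR : (0:ℝ) < K := by exact_mod_cast hK
  have hsum : Summable (fun k : ℕ => 1 / (((k:ℝ)+(K:ℝ)+1)^2)) := by
    have h2 := (summable_nat_add_iff (f := fun k : ℕ => 1/((k:ℝ)+1)^2) K).mpr summable_inv_sq
    exact h2.congr (fun n => by push_cast; ring_nf)
  have heq : ∀ n : ℕ, ∑ k ∈ Finset.range n, (1/((k:ℝ)+(K:ℝ)) - 1/((k:ℝ)+(K:ℝ)+1))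
      = 1/(K:ℝ) - 1/((n:ℝ)+(K:ℝ)) := by
    intro n
    have h := Finset.sum_range_sub' (fun k : ℕ => 1/((k:ℝ)+(K:ℝ))) n
    calc ∑ k ∈ Finset.range n, (1/((k:ℝ)+(K:ℝ)) - 1/((k:ℝ)+(K:ℝ)+1))
        = ∑ k ∈ Finset.range n, (1/((k:ℝ)+(K:ℝ)) - 1/(((k+1:ℕ):ℝ)+(K:ℝ))) := by
          apply Finset.sum_congr rfl; intro k _; push_cast; ring_nf
      _ = 1/(((0:ℕ):ℝ)+(K:ℝ)) - 1/((n:ℝ)+(K:ℝ)) := h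
      _ = 1/(K:ℝ) - 1/((n:ℝ)+(K:ℝ)) := by norm_num
  have h0 : Filter.Tendsto (fun n : ℕ => 1/((n:ℝ)+(K:ℝ))) Filter.atTop (nhds 0) := by
    simp only [one_div]
    apply Filter.Tendsto.comp tendsto_inv_atTop_zero
    apply Filter.tendsto_atTop_add_const_right
    exact tendsto_natCast_atTop_atTop
  have hH : HasSum (fun k : ℕ => 1/((k:ℝ)+(K:ℝ)) - 1/((k:ℝ)+(K:ℝ)+1)) (1/(K:ℝ)) := by
    rw [hasSum_iff_tendsto_nat_of_nonneg]
    · simp_rw [heq]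
      simpa using Filter.Tendsto.sub (tendsto_const_nhds (x := 1/(K:ℝ))) h0
    · intro k
      have h1 : (0:ℝ) < (k:ℝ)+(K:ℝ) := by positivity
      rw [sub_nonneg]
      apply one_div_le_one_div_of_le h1 (by linarith)
  calc ∑' k : ℕ, 1 / (((k:ℝ)+(K:ℝ)+1)^2)
      ≤ ∑' k : ℕ, (1/((k:ℝ)+(K:ℝ)) - 1/((k:ℝ)+(K:ℝ)+1)) := by
        apply Summable.tsum_le_tsum ?_ hsum hH.summable
        intro k
        have h1 : (0:ℝ) < (k:ℝ)+(K:ℝ) := by positivity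
        rw [div_sub_div _ _ h1.ne' (by positivity), one_mul, mul_one]
        rw [div_le_div_iff₀ (by positivity) (by positivity)]
        ring_nf
        nlinarith
    _ = 1/(K:ℝ) := hH.tsum_eq

/-- Lower bound for the zero-distance series. -/
lemma S0_lower {τ : ℝ} (hτ0 : 0 < τ) (hτ4 : τ ≤ 1/4) :
    (1 - Real.exp (-1))/2 * Real.sqrt τ ≤ ∑' k : ℕ, gg τ k := by
  set s := Real.sqrt τ with hs
  have hs0 : 0 < s := Real.sqrt_pos.mpr hτ0
  have hss : s * s = τ := Real.mul_self_sqrt hτ0.le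
  have hs2 : s ≤ 1/2 := by
    rw [hs, show (1:ℝ)/2 = Real.sqrt (1/4) by
      rw [show (1:ℝ)/4 = (1/2)^2 by norm_num, Real.sqrt_sq (by norm_num)]]
    exact Real.sqrt_le_sqrt hτ4
  set K := ⌊1/s⌋₊ with hKdef
  have hKlb : (1:ℝ)/(2*s) ≤ (K:ℝ) := by
    have h1 : (1:ℝ)/s - 1 < (K:ℝ) := by
      have := Nat.lt_floor_add_one (1/s)
      linarith [this]
    have h2 : (2:ℝ) ≤ 1/s := by
      rw [le_div_iff₀ hs0]; linarith
    have : (1:ℝ)/(2*s) ≤ 1/s - 1 := by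
      rw [div_le_iff₀ (by positivity)]
      have expand : (1/s - 1) * (2*s) = 2 - 2*s := by field_simp
      rw [expand]
      nlinarith [h2, hs0]
    linarith
  have hterm : ∀ k ∈ Finset.range K, τ * (1 - Real.exp (-1)) ≤ gg τ k := by
    intro k hk
    have hkK : (k:ℝ) + 1 ≤ (K:ℝ) := by
      have : k + 1 ≤ K := Finset.mem_range.mp hk
      exact_mod_cast this
    have hKle : (K:ℝ) ≤ 1/s := Nat.floor_le (by positivity)
    have hsq : τ * ((k:ℝ)+1)^2 ≤ 1 := by
      have h1 : ((k:ℝ)+1)^2 ≤ (1/s)^2 := by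
        apply pow_le_pow_left₀ (by positivity) (hkK.trans hKle)
      have h2 : (1/s)^2 = 1/τ := by
        rw [div_pow, one_pow, sq, hss]
      rw [h2] at h1
      calc τ * ((k:ℝ)+1)^2 ≤ τ * (1/τ) := by
            apply mul_le_mul_of_nonneg_left h1 hτ0.le
        _ = 1 := by field_simp
    have hstar := star (t := τ * ((k:ℝ)+1)^2) (v := 1) (by positivity) hsq
    rw [mul_one] at hstar
    unfold gg
    rw [le_div_iff₀ (kpos k)]
    calc τ * (1 - Real.exp (-1)) * ((k:ℝ)+1)^2
        = τ * ((k:ℝ)+1)^2 * (1 - Real.exp (-1)) := by ring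
      _ ≤ 1 - Real.exp (-(τ * ((k:ℝ)+1)^2)) := hstar
  have hsum : ∑ k ∈ Finset.range K, gg τ k ≤ ∑' k : ℕ, gg τ k :=
    Summable.sum_le_tsum _ (fun k _ => gg_nonneg hτ0.le k) (summable_gg hτ0.le)
  have hKsum : (K:ℝ) * (τ * (1 - Real.exp (-1))) ≤ ∑ k ∈ Finset.range K, gg τ k := by
    calc (K:ℝ) * (τ * (1 - Real.exp (-1)))
        = ∑ _k ∈ Finset.range K, τ * (1 - Real.exp (-1)) := by
          rw [Finset.sum_const, Finset.card_range, nsmul_eq_mul]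
      _ ≤ ∑ k ∈ Finset.range K, gg τ k := Finset.sum_le_sum hterm
  have hexp : (0:ℝ) < 1 - Real.exp (-1) := by
    have : Real.exp (-1) < 1 := by
      rw [Real.exp_lt_one_iff]; norm_num
    linarith
  have hfinal : (1 - Real.exp (-1))/2 * s ≤ (K:ℝ) * (τ * (1 - Real.exp (-1))) := by
    have h1 : (1:ℝ)/(2*s) * (τ * (1 - Real.exp (-1))) ≤ (K:ℝ) * (τ * (1 - Real.exp (-1))) := by
      apply mul_le_mul_of_nonneg_right hKlb
      positivity
    have h2 : (1:ℝ)/(2*s) * (τ * (1 - Real.exp (-1))) = (1 - Real.exp (-1))/2 * s := by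
      rw [← hss]; field_simp
    linarith
  linarith

set_option maxHeartbeats 1000000 in
/-- Difference bound: `S(τ,0) - S(τ,a) ≤ K a²/2 + 2/K`. -/
lemma diff_bound {τ a : ℝ} (hτ : 0 ≤ τ) (K : ℕ) (hK : 1 ≤ K) :
    ∑' k : ℕ, gg τ k * (1 - Real.cos (((k:ℝ)+1)*a)) ≤ (K:ℝ) * a^2/2 + 2/(K:ℝ) := by
  have hKR : (0:ℝ) < K := by exact_mod_cast hK
  have hsum := summable_gg_one_sub_cos hτ a
  rw [← Summable.sum_add_tsum_nat_add K hsum]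
  have hhead : ∑ k ∈ Finset.range K, gg τ k * (1 - Real.cos (((k:ℝ)+1)*a)) ≤ (K:ℝ) * a^2/2 := by
    calc ∑ k ∈ Finset.range K, gg τ k * (1 - Real.cos (((k:ℝ)+1)*a))
        ≤ ∑ _k ∈ Finset.range K, a^2/2 := by
          apply Finset.sum_le_sum
          intro k _
          have hcos : 1 - Real.cos (((k:ℝ)+1)*a) ≤ (((k:ℝ)+1)*a)^2/2 := by
            linarith [Real.one_sub_sq_div_two_le_cos (x := ((k:ℝ)+1)*a)]
          have hcos0 : 0 ≤ 1 - Real.cos (((k:ℝ)+1)*a) := by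
            linarith [Real.cos_le_one (((k:ℝ)+1)*a)]
          calc gg τ k * (1 - Real.cos (((k:ℝ)+1)*a))
              ≤ (1/((k:ℝ)+1)^2) * ((((k:ℝ)+1)*a)^2/2) := by
                apply mul_le_mul (gg_le_inv_sq τ k) hcos hcos0 (by positivity)
            _ = a^2/2 := by field_simp [ne_of_gt (kpos k)]
      _ = (K:ℝ) * a^2/2 := by
          rw [Finset.sum_const, Finset.card_range, nsmul_eq_mul]; ring
  have hle : ∀ k : ℕ, gg τ (k+K) * (1 - Real.cos (((↑(k+K):ℝ)+1)*a)) ≤ 2 * (1 / (((k:ℝ)+(K:ℝ)+1)^2)) := by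
    intro k
    have hcos2 : 1 - Real.cos (((↑(k+K):ℝ)+1)*a) ≤ 2 := by
      linarith [Real.neg_one_le_cos (((↑(k+K):ℝ)+1)*a)]
    have hcos0 : 0 ≤ 1 - Real.cos (((↑(k+K):ℝ)+1)*a) := by
      linarith [Real.cos_le_one (((↑(k+K):ℝ)+1)*a)]
    have hgg := gg_le_inv_sq τ (k+K)
    have hgg0 := gg_nonneg hτ (k+K)
    have hcast : ((↑(k+K):ℝ)+1)^2 = ((k:ℝ)+(K:ℝ)+1)^2 := by push_cast; ring
    calc gg τ (k+K) * (1 - Real.cos (((↑(k+K):ℝ)+1)*a))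
        ≤ (1/((↑(k+K):ℝ)+1)^2) * 2 := by
          apply mul_le_mul hgg hcos2 hcos0 (by positivity)
      _ = 2 * (1 / (((k:ℝ)+(K:ℝ)+1)^2)) := by rw [hcast]; ring
  have htail : ∑' k : ℕ, gg τ (k+K) * (1 - Real.cos (((↑(k+K):ℝ)+1)*a)) ≤ 2/(K:ℝ) := by
    have hsum2 : Summable (fun k : ℕ => 1 / (((k:ℝ)+(K:ℝ)+1)^2)) := by
      have h2 := (summable_nat_add_iff (f := fun k : ℕ => 1/((k:ℝ)+1)^2) K).mpr summable_inv_sq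
      exact h2.congr (fun n => by push_cast; ring_nf)
    have step1 : ∑' k : ℕ, gg τ (k+K) * (1 - Real.cos (((↑(k+K):ℝ)+1)*a))
        ≤ ∑' k : ℕ, 2 * (1 / (((k:ℝ)+(K:ℝ)+1)^2)) :=
      Summable.tsum_le_tsum hle ((summable_nat_add_iff K).mpr hsum) (hsum2.mul_left 2)
    have step2 : ∑' k : ℕ, 2 * (1 / (((k:ℝ)+(K:ℝ)+1)^2)) = 2 * ∑' k : ℕ, 1 / (((k:ℝ)+(K:ℝ)+1)^2) :=
      tsum_mul_left
    have step3 : 2 * ∑' k : ℕ, 1 / (((k:ℝ)+(K:ℝ)+1)^2) ≤ 2 * (1/(K:ℝ)) :=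
      mul_le_mul_of_nonneg_left (tail_inv_sq hK) (by norm_num)
    have : 2 * (1/(K:ℝ)) = 2/(K:ℝ) := by ring
    linarith
  linarith

end NC

namespace NC

lemma corr_eq {ν L t : ℝ} (r : ℝ) (hL : L ≠ 0) :
    corrSeries ν L t r = ∑' k : ℕ, gg (2*ν*π^2*t/L^2) k * Real.cos (((k:ℝ)+1)*(π*r/L)) := by
  unfold corrSeries gg
  apply tsum_congr
  intro k
  have h1 : -2 * ν * π ^ 2 * ((k : ℝ) + 1) ^ 2 * t / L ^ 2
      = -((2*ν*π^2*t/L^2) * ((k:ℝ)+1)^2) := by field_simp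
  have h2 : π * ((k : ℝ) + 1) * r / L = ((k:ℝ)+1)*(π*r/L) := by field_simp
  rw [h1, h2]

lemma corr_zero {ν L t : ℝ} (hL : L ≠ 0) :
    corrSeries ν L t 0 = ∑' k : ℕ, gg (2*ν*π^2*t/L^2) k := by
  rw [corr_eq 0 hL]
  apply tsum_congr
  intro k
  simp

end NC

set_option maxHeartbeats 2000000 in
open NC in
/-- Transient regime `t ≪ L²/ν`: the typical correlation length is `√(tν)`.  The normalized
correlation stays `≥ δ` on `[0, C₁√(tν)]` and is `< ε₂` in absolute value on
`[C₂√(tν), C₃√(tν)]`. -/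
theorem normalized_correlation_transient :
    ∀ δ : ℝ, δ ∈ Set.Ioo (0 : ℝ) 1 →
      ∃ ε₀ : ℝ, 0 < ε₀ ∧ ∀ ε₂ : ℝ, ε₂ ∈ Set.Ioo (0 : ℝ) ε₀ →
        ∃ ε₁ C₁ C₂ C₃ : ℝ, 0 < ε₁ ∧ 0 < C₁ ∧ C₁ < C₂ ∧ C₂ < C₃ ∧
          ∀ ν L t : ℝ, 0 < ν → 0 < L → 0 < t → t < ε₁ * L ^ 2 / ν →
            (∀ r : ℝ, r ∈ Set.Icc 0 (C₁ * Real.sqrt (t * ν)) →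
                δ ≤ normCorr ν L t r) ∧
              ∀ r : ℝ, r ∈ Set.Icc (C₂ * Real.sqrt (t * ν)) (C₃ * Real.sqrt (t * ν)) →
                |normCorr ν L t r| < ε₂ := by
  intro δ hδ
  obtain ⟨hδ0, hδ1⟩ := hδ
  refine ⟨1, one_pos, ?_⟩
  intro ε₂ hε₂
  obtain ⟨hε20, hε21⟩ := hε₂
  have hπ : 0 < π := pi_pos
  have hπ3 : 3 < π := pi_gt_three
  have hexp1 : Real.exp (-1) < 1 := by rw [Real.exp_lt_one_iff]; norm_num
  set c₀ : ℝ := (1 - Real.exp (-1))/2 with hc₀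
  have hc₀0 : 0 < c₀ := by rw [hc₀]; linarith
  have hc₀half : c₀ < 1/2 := by
    rw [hc₀]; linarith [Real.exp_pos (-1 : ℝ)]
  have h1δ : 0 < 1 - δ := by linarith
  set B : ℝ := 4/((1-δ)*c₀) with hB
  have hB0 : 0 < B := by positivity
  have hB8 : 8 ≤ B := by
    rw [hB, le_div_iff₀ (by positivity)]
    nlinarith
  set C₁ : ℝ := (1-δ)*c₀/2 with hC₁
  have hC₁0 : 0 < C₁ := by positivity
  have hC₁1 : C₁ < 1 := by nlinarith
  have hsqrt2 : 1 ≤ Real.sqrt 2 := by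
    rw [show (1:ℝ) = Real.sqrt 1 by simp]
    exact Real.sqrt_le_sqrt (by norm_num)
  have hsqrt2' : 0 < Real.sqrt 2 := by linarith
  set C₂ : ℝ := 2*Real.sqrt 2*π/(c₀*ε₂) with hC₂
  have hC₂0 : 0 < C₂ := by positivity
  have hC₂1 : 1 < C₂ := by
    rw [hC₂, lt_div_iff₀ (by positivity)]
    nlinarith
  set C₃ : ℝ := C₂ + 1 with hC₃
  have hC₃0 : 0 < C₃ := by linarith
  set ε₁ : ℝ := min (1/(8*π^2)) (1/C₃^2) with hε₁
  have hε₁0 : 0 < ε₁ := lt_min (by positivity) (by positivity)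
  refine ⟨ε₁, C₁, C₂, C₃, hε₁0, hC₁0, by linarith, by linarith, ?_⟩
  intro ν L t hν hL ht htlt
  have hLne : L ≠ 0 := ne_of_gt hL
  set τ : ℝ := 2*ν*π^2*t/L^2 with hτdef
  have hτ0 : 0 < τ := by positivity
  have hτlt : τ < 2*π^2*ε₁ := by
    rw [hτdef, div_lt_iff₀ (by positivity)]
    have h1 : 2*ν*π^2*t < 2*ν*π^2*(ε₁*L^2/ν) := by
      apply mul_lt_mul_of_pos_left htlt (by positivity)
    calc 2*ν*π^2*t < 2*ν*π^2*(ε₁*L^2/ν) := h1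
      _ = 2*π^2*ε₁*L^2 := by field_simp
  have hτ4 : τ ≤ 1/4 := by
    have h1 : ε₁ ≤ 1/(8*π^2) := min_le_left _ _
    have h2 : 2*π^2*ε₁ ≤ 2*π^2*(1/(8*π^2)) := by
      apply mul_le_mul_of_nonneg_left h1 (by positivity)
    have h3 : 2*π^2*(1/(8*π^2)) = 1/4 := by field_simp; ring
    linarith
  have hτC₃ : τ < 2*π^2/C₃^2 := by
    have h1 : ε₁ ≤ 1/C₃^2 := min_le_right _ _
    have h2 : 2*π^2*ε₁ ≤ 2*π^2*(1/C₃^2) := by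
      apply mul_le_mul_of_nonneg_left h1 (by positivity)
    have h3 : 2*π^2*(1/C₃^2) = 2*π^2/C₃^2 := by ring
    linarith
  set s : ℝ := Real.sqrt τ with hsdef
  have hs0 : 0 < s := Real.sqrt_pos.mpr hτ0
  have hss : s^2 = τ := Real.sq_sqrt hτ0.le
  have hshalf : s ≤ 1/2 := by
    rw [hsdef, show (1:ℝ)/2 = Real.sqrt (1/4) by
      rw [show (1:ℝ)/4 = (1/2)^2 by norm_num, Real.sqrt_sq (by norm_num)]]
    exact Real.sqrt_le_sqrt hτ4
  -- the scale identity : π√(tν)/L = s/√2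
  have hkey : π * Real.sqrt (t*ν) / L = s / Real.sqrt 2 := by
    have ha : 0 ≤ π * Real.sqrt (t*ν) / L := by positivity
    have hb : 0 ≤ s / Real.sqrt 2 := by positivity
    have hsq : (π * Real.sqrt (t*ν) / L)^2 = (s / Real.sqrt 2)^2 := by
      have e1 : Real.sqrt (t*ν)^2 = t*ν := Real.sq_sqrt (by positivity)
      have e3 : Real.sqrt 2^2 = 2 := Real.sq_sqrt (by norm_num)
      rw [div_pow, div_pow, mul_pow, e1, hss, e3, hτdef]
      field_simp
    calc π * Real.sqrt (t*ν) / L = Real.sqrt ((π * Real.sqrt (t*ν) / L)^2) :=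
          (Real.sqrt_sq ha).symm
      _ = Real.sqrt ((s / Real.sqrt 2)^2) := by rw [hsq]
      _ = s / Real.sqrt 2 := Real.sqrt_sq hb
  -- series values
  have hS0low : c₀ * s ≤ ∑' k : ℕ, gg τ k := S0_lower hτ0 hτ4
  have hS0pos : 0 < ∑' k : ℕ, gg τ k := lt_of_lt_of_le (by positivity) hS0low
  constructor
  · -- Part 1
    intro r hr
    obtain ⟨hr0, hr1⟩ := hr
    set a : ℝ := π*r/L with hadef
    have ha0 : 0 ≤ a := by positivity
    have ha1 : a ≤ C₁*(s/Real.sqrt 2) := by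
      have h2 : (π/L)*r ≤ (π/L)*(C₁ * Real.sqrt (t*ν)) := by
        apply mul_le_mul_of_nonneg_left hr1 (by positivity)
      have h3 : (π/L)*(C₁ * Real.sqrt (t*ν)) = C₁*(π * Real.sqrt (t*ν) / L) := by ring
      rw [h3, hkey] at h2
      calc a = (π/L)*r := by rw [hadef]; ring
        _ ≤ C₁*(s/Real.sqrt 2) := h2
    have ha2 : a^2 ≤ C₁^2*τ/2 := by
      have h1 : a^2 ≤ (C₁*(s/Real.sqrt 2))^2 := by
        apply pow_le_pow_left₀ ha0 ha1
      have h2 : (C₁*(s/Real.sqrt 2))^2 = C₁^2*τ/2 := by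
        have e3 : (Real.sqrt 2)^2 = 2 := Real.sq_sqrt (by norm_num)
        have e4 : (C₁*(s/Real.sqrt 2))^2 * (Real.sqrt 2)^2 = C₁^2*s^2 := by
          field_simp
        rw [e3, hss] at e4
        linarith only [e4]
      linarith only [h1, h2]
    set K : ℕ := ⌈B/s⌉₊ with hKdef
    have hBs0 : 0 < B/s := by positivity
    have hK1 : 1 ≤ K := Nat.ceil_pos.mpr hBs0
    have hKge : B/s ≤ (K:ℝ) := Nat.le_ceil _
    have hKle : (K:ℝ) ≤ B/s + 1 := (Nat.ceil_lt_add_one hBs0.le).le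
    have hKpos : (0:ℝ) < K := lt_of_lt_of_le hBs0 hKge
    have hBs1 : 1 ≤ B/s := by
      rw [le_div_iff₀ hs0]; linarith only [hB8, hshalf, hs0]
    -- difference bound
    have hΔ := diff_bound hτ0.le K hK1 (a := a)
    have hhead : (K:ℝ)*a^2/2 ≤ (1-δ)*c₀*s/2 := by
      have h1 : (K:ℝ)*a^2 ≤ (2*(B/s))*(C₁^2*τ/2) := by
        apply mul_le_mul (by linarith only [hKle, hBs1]) ha2 (by positivity) (by positivity)
      have h2 : (2*(B/s))*(C₁^2*τ/2) = B*C₁^2*s := by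
        rw [← hss]; field_simp
      have h3 : B*C₁^2*s = (1-δ)*c₀*s := by
        rw [hB, hC₁]; field_simp; ring
      linarith only [h1, h2, h3]
    have htail : 2/(K:ℝ) ≤ (1-δ)*c₀*s/2 := by
      have h1 : 2/(K:ℝ) ≤ 2/(B/s) := by
        apply div_le_div_of_nonneg_left (by norm_num) hBs0 hKge
      have h2 : 2/(B/s) = (1-δ)*c₀*s/2 := by
        rw [hB]; field_simp; ring
      linarith only [h1, h2]
    have hdiff : ∑' k : ℕ, gg τ k * (1 - Real.cos (((k:ℝ)+1)*a)) ≤ (1-δ)*c₀*s := by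
      linarith only [hΔ, hhead, htail]
    have hsub : ∑' k : ℕ, gg τ k * (1 - Real.cos (((k:ℝ)+1)*a))
        = (∑' k : ℕ, gg τ k) - ∑' k : ℕ, gg τ k * Real.cos (((k:ℝ)+1)*a) := by
      rw [← Summable.tsum_sub (summable_gg hτ0.le) (summable_gg_cos hτ0.le a)]
      apply tsum_congr
      intro k
      ring
    have hSa : δ * (∑' k : ℕ, gg τ k) ≤ ∑' k : ℕ, gg τ k * Real.cos (((k:ℝ)+1)*a) := by
      have h1 : (1-δ)*(c₀*s) ≤ (1-δ)*(∑' k : ℕ, gg τ k) := by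
        apply mul_le_mul_of_nonneg_left hS0low h1δ.le
      have h2 : (1-δ)*c₀*s = (1-δ)*(c₀*s) := by ring
      linarith only [h1, h2, hdiff, hsub]
    unfold normCorr
    rw [corr_eq r hLne, corr_zero hLne, ← hτdef, ← hadef]
    rw [le_div_iff₀ hS0pos]
    linarith only [hSa]
  · -- Part 2
    intro r hr
    obtain ⟨hr2, hr3⟩ := hr
    set a : ℝ := π*r/L with hadef
    have hsdvd : 0 < s/Real.sqrt 2 := by positivity
    have ha2 : C₂*(s/Real.sqrt 2) ≤ a := by
      have h1 : (π/L)*(C₂ * Real.sqrt (t*ν)) ≤ (π/L)*r := by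
        apply mul_le_mul_of_nonneg_left hr2 (by positivity)
      have h3 : (π/L)*(C₂ * Real.sqrt (t*ν)) = C₂*(π * Real.sqrt (t*ν) / L) := by ring
      rw [h3, hkey] at h1
      calc C₂*(s/Real.sqrt 2) ≤ (π/L)*r := h1
        _ = a := by rw [hadef]; ring
    have ha3 : a ≤ C₃*(s/Real.sqrt 2) := by
      have h1 : (π/L)*r ≤ (π/L)*(C₃ * Real.sqrt (t*ν)) := by
        apply mul_le_mul_of_nonneg_left hr3 (by positivity)
      have h3 : (π/L)*(C₃ * Real.sqrt (t*ν)) = C₃*(π * Real.sqrt (t*ν) / L) := by ring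
      rw [h3, hkey] at h1
      calc a = (π/L)*r := by rw [hadef]; ring
        _ ≤ C₃*(s/Real.sqrt 2) := h1
    have ha0 : 0 < a := lt_of_lt_of_le (by positivity) ha2
    have hapi : a < π := by
      have h1 : s < π*Real.sqrt 2/C₃ := by
        have hb0 : (0:ℝ) ≤ π*Real.sqrt 2/C₃ := by positivity
        have h2 : τ < (π*Real.sqrt 2/C₃)^2 := by
          have : (π*Real.sqrt 2/C₃)^2 = 2*π^2/C₃^2 := by
            rw [div_pow, mul_pow, Real.sq_sqrt (by norm_num : (0:ℝ) ≤ 2)]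
            ring
          linarith only [hτC₃, this]
        calc s = Real.sqrt τ := hsdef
          _ < Real.sqrt ((π*Real.sqrt 2/C₃)^2) := Real.sqrt_lt_sqrt hτ0.le h2
          _ = π*Real.sqrt 2/C₃ := Real.sqrt_sq hb0
      calc a ≤ C₃*(s/Real.sqrt 2) := ha3
        _ < C₃*((π*Real.sqrt 2/C₃)/Real.sqrt 2) := by
            gcongr
        _ = π := by field_simp
    have hsin : a/π ≤ Real.sin (a/2) := by
      have h := Real.mul_le_sin (x := a/2) (by linarith only [ha0]) (by linarith only [hapi, hπ])
      calc a/π = 2/π*(a/2) := by ring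
        _ ≤ Real.sin (a/2) := h
    have hsin0 : 0 < Real.sin (a/2) := lt_of_lt_of_le (div_pos ha0 hπ) hsin
    have habel := abel_tsum hτ0.le hsin0
    have h1 : τ / Real.sin (a/2) ≤ τ/(a/π) :=
      div_le_div_of_nonneg_left hτ0.le (by positivity) hsin
    have h2 : τ/(a/π) ≤ τ/(C₂*(s/Real.sqrt 2)/π) := by
      apply div_le_div_of_nonneg_left hτ0.le (by positivity)
      gcongr
    have h3 : τ/(C₂*(s/Real.sqrt 2)/π) = Real.sqrt 2*π*s/C₂ := by
      rw [← hss]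
      field_simp
    have hE : |∑' k : ℕ, gg τ k * Real.cos (((k:ℝ)+1)*a)| ≤ Real.sqrt 2*π*s/C₂ := by
      calc |∑' k : ℕ, gg τ k * Real.cos (((k:ℝ)+1)*a)| ≤ τ / Real.sin (a/2) := habel
        _ ≤ τ/(a/π) := h1
        _ ≤ τ/(C₂*(s/Real.sqrt 2)/π) := h2
        _ = Real.sqrt 2*π*s/C₂ := h3
    unfold normCorr
    rw [corr_eq r hLne, corr_zero hLne, ← hτdef, ← hadef, abs_div, abs_of_pos hS0pos]
    have hfinal : (Real.sqrt 2*π*s/C₂)/(c₀*s) = ε₂/2 := by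
      rw [hC₂]
      field_simp
    have hchain : |∑' k : ℕ, gg τ k * Real.cos (((k:ℝ)+1)*a)| / (∑' k : ℕ, gg τ k)
        ≤ (Real.sqrt 2*π*s/C₂)/(c₀*s) :=
      div_le_div₀ (by positivity) hE (by positivity) hS0low
    rw [hfinal] at hchain
    linarith only [hchain, hε20]
end

section
/- Define S(t,r) = ∑_{k=1}^∞ (1 − exp(−2νπ²k²t/L²))·k^{−2}·cos(πkr/L) and the normalized correlation function ρ(t,r) = S(t,r)/S(t,0) for ν, L, t > 0, r ≥ 0. For every δ ∈ (0, 0.8) there is ε₀ > 0 such that for every ε₂ ∈ (0,ε₀) there exist ε₁ > 0, a constant C > 0 and a point x₀ > 0, depending only on δ and ε₂, with the following property: for all ν, L > 0 and all t > L²/(ν·ε₁), one has ρ(t,r) ≥ δ for every r ∈ [0, C·L], and |ρ(t, x₀·L)| < ε₂. -/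
open Real

lemma cosSum {x : ℝ} (hx : x ∈ Set.Icc (0:ℝ) 2) :
    HasSum (fun k : ℕ => Real.cos (π * ((k:ℝ)+1) * x) / ((k:ℝ)+1)^2)
      (π^2 * (x^2/4 - x/2 + 1/6)) := by
  have hx2 : x/2 ∈ Set.Icc (0:ℝ) 1 := ⟨by linarith [hx.1], by linarith [hx.2]⟩
  have h := hasSum_one_div_nat_pow_mul_cos (k := 1) one_ne_zero hx2
  have hB : (Polynomial.map (algebraMap ℚ ℝ) (Polynomial.bernoulli 2)).eval (x/2)
      = (x/2)^2 - (x/2) + 1/6 := by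
    simp [Polynomial.bernoulli, Finset.sum_range_succ, Polynomial.eval_monomial]
    norm_num [bernoulli]
    ring
  rw [show 2*1 = 2 from rfl, hB] at h
  have h' : HasSum ((fun n : ℕ => 1 / ((n:ℕ):ℝ) ^ 2 * Real.cos (2 * π * ((n:ℕ):ℝ) * (x/2))) ∘
        Nat.succ)
      ((-1:ℝ) ^ (1 + 1) * (2 * π) ^ 2 / 2 / (Nat.factorial 2) * ((x / 2) ^ 2 - x / 2 + 1 / 6)) := by
    apply (Function.Injective.hasSum_iff Nat.succ_injective ?_).mpr h
    intro n hn
    have : n = 0 := by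
      rcases n with _ | m
      · rfl
      · exact absurd ⟨m, rfl⟩ hn
    subst this; norm_num
  have h'' : HasSum (fun n : ℕ => 1 / ((n:ℝ)+1) ^ 2 * Real.cos (2 * π * ((n:ℝ)+1) * (x/2)))
      ((-1:ℝ) ^ (1 + 1) * (2 * π) ^ 2 / 2 / (Nat.factorial 2) * ((x / 2) ^ 2 - x / 2 + 1 / 6)) := by
    convert h' using 2 with n
    simp [Function.comp, Nat.succ_eq_add_one]
  convert h'' using 1
  · ext k
    rw [div_eq_mul_one_div, mul_comm]
    congr 2
    ring
  · rw [Nat.factorial]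
    norm_num
    ring

lemma zetaTwo : HasSum (fun k : ℕ => 1 / ((k:ℝ)+1)^2) (π^2/6) := by
  have h := cosSum (x := 0) ⟨le_refl 0, by norm_num⟩
  simpa [div_eq_mul_inv] using h

lemma expPart (a : ℝ) (ha : 0 ≤ a) (c : ℕ → ℝ) (hc : ∀ k, |c k| ≤ 1) :
    Summable (fun k : ℕ => Real.exp (-(a*((k:ℝ)+1)^2)) / ((k:ℝ)+1)^2 * c k) ∧
      |∑' k : ℕ, Real.exp (-(a*((k:ℝ)+1)^2)) / ((k:ℝ)+1)^2 * c k| ≤ Real.exp (-a) * (π^2/6) := by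
  have hg : HasSum (fun k : ℕ => Real.exp (-a) * (1 / ((k:ℝ)+1)^2)) (Real.exp (-a) * (π^2/6)) :=
    zetaTwo.mul_left _
  have hbound : ∀ k : ℕ, ‖Real.exp (-(a*((k:ℝ)+1)^2)) / ((k:ℝ)+1)^2 * c k‖ ≤
      Real.exp (-a) * (1 / ((k:ℝ)+1)^2) := by
    intro k
    have hk1 : (0:ℝ) < ((k:ℝ)+1)^2 := by positivity
    have he : Real.exp (-(a*((k:ℝ)+1)^2)) ≤ Real.exp (-a) := by
      apply Real.exp_le_exp.mpr
      have : a ≤ a * ((k:ℝ)+1)^2 := by nlinarith [sq_nonneg ((k:ℝ)), Nat.cast_nonneg (α:=ℝ) k]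
      linarith
    have he0 : 0 < Real.exp (-(a*((k:ℝ)+1)^2)) := Real.exp_pos _
    rw [Real.norm_eq_abs, abs_mul, abs_div, abs_of_pos he0, abs_of_pos hk1]
    calc Real.exp (-(a*((k:ℝ)+1)^2)) / ((k:ℝ)+1)^2 * |c k|
        ≤ Real.exp (-(a*((k:ℝ)+1)^2)) / ((k:ℝ)+1)^2 * 1 := by
          apply mul_le_mul_of_nonneg_left (hc k) (by positivity)
      _ ≤ Real.exp (-a) * (1 / ((k:ℝ)+1)^2) := by
          rw [mul_one, mul_one_div]
          gcongr
  constructor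
  · exact Summable.of_norm_bounded hg.summable hbound
  · exact tsum_of_norm_bounded hg hbound

lemma corr_decomp (ν L t r : ℝ) (hν : 0 < ν) (hL : 0 < L) (ht : 0 < t)
    (hr : r / L ∈ Set.Icc (0:ℝ) 2) :
    ∃ E : ℝ, |E| ≤ Real.exp (-(2*ν*π^2*t/L^2)) * (π^2/6) ∧
      corrSeries ν L t r = π^2 * ((r/L)^2/4 - (r/L)/2 + 1/6) - E := by
  set a := 2*ν*π^2*t/L^2 with ha_def
  have ha : 0 < a := by have := Real.pi_pos; positivity
  set x := r / L with hx_def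
  have h1 := cosSum hr
  obtain ⟨hsum, hbd⟩ := expPart a ha.le (fun k => Real.cos (π * ((k:ℝ)+1) * x))
    (fun k => Real.abs_cos_le_one _)
  refine ⟨_, hbd, ?_⟩
  have h2 := h1.sub hsum.hasSum
  have heq : (fun k : ℕ => Real.cos (π * ((k:ℝ)+1) * x) / ((k:ℝ)+1)^2
      - Real.exp (-(a*((k:ℝ)+1)^2)) / ((k:ℝ)+1)^2 * Real.cos (π * ((k:ℝ)+1) * x))
      = fun k : ℕ => (1 - Real.exp (-2 * ν * π ^ 2 * ((k : ℝ) + 1) ^ 2 * t / L ^ 2)) /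
      ((k : ℝ) + 1) ^ 2 * Real.cos (π * ((k : ℝ) + 1) * r / L) := by
    funext k
    have harg : π * ((k:ℝ)+1) * r / L = π * ((k:ℝ)+1) * x := by
      rw [hx_def]; ring
    have hexp : -(a*((k:ℝ)+1)^2) = -2 * ν * π ^ 2 * ((k : ℝ) + 1) ^ 2 * t / L ^ 2 := by
      rw [ha_def]; field_simp
    rw [harg, hexp]
    ring
  rw [heq] at h2
  rw [corrSeries]
  exact h2.tsum_eq


lemma quad_bound {δ x : ℝ} (hx0 : 0 ≤ x) (hxC : x ≤ (0.8 - δ)/3) :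
    δ/6 + 1/30 ≤ x^2/4 - x/2 + 1/6 := by nlinarith [sq_nonneg x]

lemma main_ineq1 {P δ e D N : ℝ} (hP : 0 < P) (hδ0 : 0 < δ) (hδ1 : δ < 1)
    (he : e < P/120) (he0 : 0 ≤ e) (hN : P*(δ/6 + 1/30) - e ≤ N) (hD : D ≤ P/6 + e)
    (hD0 : 0 ≤ D) : δ * D ≤ N := by
  nlinarith [mul_le_mul_of_nonneg_left hD hδ0.le]

set_option maxHeartbeats 1000000 in
/-- Long-time regime `t ≫ L²/ν`: the typical correlation length is of order `L`.  The
normalized correlation stays `≥ δ` on `[0, C·L]` and is `< ε₂` in absolute value at `x₀·L`. -/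
theorem normalized_correlation_long_time :
    ∀ δ : ℝ, δ ∈ Set.Ioo (0 : ℝ) 0.8 →
      ∃ ε₀ : ℝ, 0 < ε₀ ∧ ∀ ε₂ : ℝ, ε₂ ∈ Set.Ioo (0 : ℝ) ε₀ →
        ∃ ε₁ C x₀ : ℝ, 0 < ε₁ ∧ 0 < C ∧ 0 < x₀ ∧
          ∀ ν L t : ℝ, 0 < ν → 0 < L → L ^ 2 / (ν * ε₁) < t →
            (∀ r : ℝ, r ∈ Set.Icc 0 (C * L) → δ ≤ normCorr ν L t r) ∧
              |normCorr ν L t (x₀ * L)| < ε₂ := by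
  intro δ hδ
  obtain ⟨hδ0, hδ8⟩ := hδ
  refine ⟨0.1, by norm_num, ?_⟩
  intro ε₂ ⟨hε₂0, hε₂1⟩
  have hπ := Real.pi_pos
  have hπ2 : (0:ℝ) < π^2 := by positivity
  have hs3 : (Real.sqrt 3)^2 = 3 := Real.sq_sqrt (by norm_num)
  have hs3n : 0 ≤ Real.sqrt 3 := Real.sqrt_nonneg 3
  have hs3lt : Real.sqrt 3 < 3 := by nlinarith
  have hs3gt : 1 < Real.sqrt 3 := by nlinarith
  have hlog : 0 < Real.log (2/ε₂) := by
    apply Real.log_pos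
    rw [lt_div_iff₀ hε₂0]
    linarith
  refine ⟨2*π^2 / Real.log (2/ε₂), (0.8 - δ)/3, 1 - Real.sqrt 3/3, by positivity,
    by linarith, by linarith, ?_⟩
  intro ν L t hν hL ht
  have ht0 : 0 < t := lt_trans (by positivity) ht
  -- the exponential bound
  have hexp : Real.exp (-(2*ν*π^2*t/L^2)) < ε₂/2 := by
    have ha : Real.log (2/ε₂) < 2*ν*π^2*t/L^2 := by
      rw [div_lt_iff₀ (by positivity)] at ht
      have h1 := mul_lt_mul_of_pos_right ht hlog
      have heq : t * (ν * (2 * π^2 / Real.log (2/ε₂))) * Real.log (2/ε₂)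
          = 2*ν*π^2*t := by field_simp
      rw [heq] at h1
      rw [lt_div_iff₀ (by positivity)]
      nlinarith
    calc Real.exp (-(2*ν*π^2*t/L^2)) < Real.exp (-Real.log (2/ε₂)) := by
          apply Real.exp_lt_exp.mpr; linarith
      _ = ε₂/2 := by
          rw [Real.exp_neg, Real.exp_log (by positivity)]
          field_simp
  set e := Real.exp (-(2*ν*π^2*t/L^2)) * (π^2/6) with he_def
  have he_lt : e < ε₂/2 * (π^2/6) :=
    mul_lt_mul_of_pos_right hexp (by positivity)
  have he_small : e < π^2/120 := by
    have h2 : ε₂/2 * (π^2/6) < 0.1/2 * (π^2/6) :=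
      mul_lt_mul_of_pos_right (by linarith) (by positivity)
    nlinarith
  have he_nonneg : 0 ≤ e := by positivity
  -- denominator
  obtain ⟨E₀, hE₀, hD⟩ := corr_decomp ν L t 0 hν hL ht0 (by
    rw [zero_div]; exact ⟨le_refl 0, by norm_num⟩)
  have hD' : corrSeries ν L t 0 = π^2/6 - E₀ := by
    rw [hD, zero_div]; ring
  have hE₀e := abs_le.mp hE₀
  have hDpos : 0 < corrSeries ν L t 0 := by rw [hD']; nlinarith
  have hDlb : π^2/12 < corrSeries ν L t 0 := by rw [hD']; nlinarith
  have hDub : corrSeries ν L t 0 ≤ π^2/6 + e := by rw [hD']; linarith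
  constructor
  · -- part 1
    intro r hr
    obtain ⟨hr0, hrC⟩ := hr
    have hx0 : 0 ≤ r / L := by positivity
    have hxC : r / L ≤ (0.8 - δ)/3 := by
      rw [div_le_iff₀ hL]; linarith
    have hx2 : r / L ∈ Set.Icc (0:ℝ) 2 := ⟨hx0, by linarith⟩
    obtain ⟨E, hE, hN⟩ := corr_decomp ν L t r hν hL ht0 hx2
    have hEe := abs_le.mp hE
    rw [normCorr, le_div_iff₀ hDpos, hN]
    have hq := quad_bound (δ := δ) hx0 hxC
    have hfx : π^2 * (δ/6 + 1/30) ≤ π^2 * ((r/L)^2/4 - (r/L)/2 + 1/6) :=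
      mul_le_mul_of_nonneg_left hq hπ2.le
    have hδ1 : δ < 1 := by linarith
    have hNb : π^2*(δ/6 + 1/30) - e ≤ π^2 * ((r/L)^2/4 - (r/L)/2 + 1/6) - E := by
      linarith [hEe.2]
    exact main_ineq1 hπ2 hδ0 hδ1 he_small he_nonneg hNb hDub hDpos.le
  · -- part 2
    have hxL : (1 - Real.sqrt 3/3) * L / L = 1 - Real.sqrt 3/3 := by
      rw [mul_div_assoc, div_self hL.ne', mul_one]
    have hx2 : (1 - Real.sqrt 3/3) * L / L ∈ Set.Icc (0:ℝ) 2 := by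
      rw [hxL]; exact ⟨by linarith, by linarith⟩
    obtain ⟨E, hE, hN⟩ := corr_decomp ν L t ((1 - Real.sqrt 3/3) * L) hν hL ht0 hx2
    rw [hxL] at hN
    have h0 : (1 - Real.sqrt 3/3)^2/4 - (1 - Real.sqrt 3/3)/2 + 1/6 = 0 := by
      linear_combination hs3/36
    rw [normCorr, hN, h0, mul_zero, zero_sub, abs_div, abs_neg, abs_of_pos hDpos,
      div_lt_iff₀ hDpos]
    calc |E| ≤ e := hE
      _ < ε₂/2 * (π^2/6) := he_lt
      _ = ε₂ * (π^2/12) := by ring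
      _ ≤ ε₂ * corrSeries ν L t 0 := by
          exact mul_le_mul_of_nonneg_left hDlb.le hε₂0.le
end

section
/- Let L > 0, let v : [−L, L] → ℝ be continuously differentiable with v(−L) = v(L) = 0, and let Φ : [−L, L] → ℝ be continuous. Then ∫_{−L}^L (v(x) + Φ(x))²·v'(x) dx ≤ ‖v'‖_{L²(−L,L)}·‖Φ‖²_{L⁴(−L,L)} + 2·‖v'‖_{L²(−L,L)}·‖Φ‖_{L^∞(−L,L)}·‖v‖_{L²(−L,L)}. -/
open MeasureTheory

/-- Cauchy–Schwarz for interval integrals of continuous functions. -/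
lemma cs_interval {a b : ℝ} (hab : a ≤ b) {f g : ℝ → ℝ}
    (hf : ContinuousOn f (Set.Icc a b)) (hg : ContinuousOn g (Set.Icc a b)) :
    ∫ x in a..b, |f x| * |g x| ≤
      Real.sqrt (∫ x in a..b, f x ^ 2) * Real.sqrt (∫ x in a..b, g x ^ 2) := by
  have hμle : volume.restrict (Set.Ioc a b) ≤ volume.restrict (Set.Icc a b) :=
    Measure.restrict_mono Set.Ioc_subset_Icc_self le_rfl
  haveI : IsFiniteMeasure (volume.restrict (Set.Ioc a b)) := by
    constructor
    rw [Measure.restrict_apply_univ, Real.volume_Ioc]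
    exact ENNReal.ofReal_lt_top
  have hpq : (2 : ℝ).HolderConjugate 2 := Real.holderConjugate_iff.mpr ⟨one_lt_two, by norm_num⟩
  have memf : MemLp f (ENNReal.ofReal 2) (volume.restrict (Set.Ioc a b)) := by
    obtain ⟨C, hC⟩ := IsCompact.exists_bound_of_continuousOn isCompact_Icc hf
    refine MemLp.of_bound ((hf.aestronglyMeasurable measurableSet_Icc).mono_measure hμle) C ?_
    filter_upwards [ae_restrict_mem measurableSet_Ioc] with x hx
    exact hC x (Set.Ioc_subset_Icc_self hx)
  have memg : MemLp g (ENNReal.ofReal 2) (volume.restrict (Set.Ioc a b)) := by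
    obtain ⟨C, hC⟩ := IsCompact.exists_bound_of_continuousOn isCompact_Icc hg
    refine MemLp.of_bound ((hg.aestronglyMeasurable measurableSet_Icc).mono_measure hμle) C ?_
    filter_upwards [ae_restrict_mem measurableSet_Ioc] with x hx
    exact hC x (Set.Ioc_subset_Icc_self hx)
  have key := integral_mul_le_Lp_mul_Lq_of_nonneg hpq
    (ae_of_all _ fun x => abs_nonneg (f x))
    (ae_of_all _ fun x => abs_nonneg (g x)) memf.abs memg.abs
  rw [intervalIntegral.integral_of_le hab, intervalIntegral.integral_of_le hab,
    intervalIntegral.integral_of_le hab]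
  have h2 : ∀ h : ℝ → ℝ, (∫ x in Set.Ioc a b, h x ^ 2) = ∫ x in Set.Ioc a b, |h x| ^ (2:ℝ) := by
    intro h
    refine integral_congr_ae (ae_of_all _ fun x => ?_)
    show h x ^ 2 = |h x| ^ (2:ℝ)
    rw [show (2:ℝ) = ((2:ℕ):ℝ) by norm_num, Real.rpow_natCast, sq_abs]
  rw [h2 f, h2 g, Real.sqrt_eq_rpow, Real.sqrt_eq_rpow]
  exact key

/-- Estimate of the Burgers nonlinearity: for `v` continuously differentiable on `[-L,L]`
with `v(-L) = v(L) = 0` and `Φ` continuous,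
`∫_{-L}^L (v + Φ)² v' dx ≤ ‖v'‖_{L²} ‖Φ‖²_{L⁴} + 2 ‖v'‖_{L²} ‖Φ‖_{L^∞} ‖v‖_{L²}`. -/
theorem burgers_nonlinearity_bound (L : ℝ) (hL : 0 < L) (v Φ : ℝ → ℝ)
    (hv : ContDiffOn ℝ 1 v (Set.Icc (-L) L))
    (hvL : v (-L) = 0) (hvR : v L = 0)
    (hΦ : ContinuousOn Φ (Set.Icc (-L) L)) :
    ∫ x in (-L : ℝ)..L, (v x + Φ x) ^ 2 * derivWithin v (Set.Icc (-L) L) x ≤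
      Real.sqrt (∫ x in (-L : ℝ)..L, (derivWithin v (Set.Icc (-L) L) x) ^ 2) *
          Real.sqrt (∫ x in (-L : ℝ)..L, (Φ x) ^ 4) +
        2 * Real.sqrt (∫ x in (-L : ℝ)..L, (derivWithin v (Set.Icc (-L) L) x) ^ 2) *
          (⨆ x ∈ Set.Icc (-L) L, |Φ x|) *
          Real.sqrt (∫ x in (-L : ℝ)..L, (v x) ^ 2) := by
  have hLL : (-L : ℝ) ≤ L := by linarith
  have hLL' : (-L : ℝ) < L := by linarith
  set s := Set.Icc (-L : ℝ) L with hs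
  set f := derivWithin v s with hfdef
  have huIcc : Set.uIcc (-L : ℝ) L = s := Set.uIcc_of_le hLL
  have hvc : ContinuousOn v s := hv.continuousOn
  have hfc : ContinuousOn f s :=
    hv.continuousOn_derivWithin (uniqueDiffOn_Icc hLL') le_rfl
  -- the sup of |Φ|
  set M := ⨆ x ∈ s, |Φ x| with hM
  have hbdd : BddAbove ((fun x => |Φ x|) '' s) :=
    (isCompact_Icc.image_of_continuousOn hΦ.abs).bddAbove
  have hne : s.Nonempty := Set.nonempty_Icc.2 hLL
  have hrange : BddAbove (Set.range fun i : s => |Φ i|) :=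
    Set.image_eq_range (fun x => |Φ x|) s ▸ hbdd
  have hpos0 : sSup (∅ : Set ℝ) ≤ ⨆ i : s, |Φ (i : ℝ)| := by
    rw [Real.sSup_empty]
    exact le_trans (abs_nonneg (Φ (-L))) (le_ciSup_set hbdd (Set.left_mem_Icc.2 hLL))
  have himg : sSup ((fun x => |Φ x|) '' s) = M := csSup_image hrange hpos0
  have hMle : ∀ x ∈ s, |Φ x| ≤ M := fun x hx =>
    himg ▸ le_csSup hbdd (Set.mem_image_of_mem _ hx)
  have hM0 : 0 ≤ M := le_trans (abs_nonneg _) (hMle (-L) (Set.left_mem_Icc.2 hLL))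
  -- FTC: ∫ v² v' = 0
  have hzero : ∫ x in (-L : ℝ)..L, v x ^ 2 * f x = 0 := by
    have := intervalIntegral.integral_eq_sub_of_hasDeriv_right_of_le hLL
      (f := fun x => v x ^ 3 / 3) (f' := fun x => v x ^ 2 * f x)
      ((hvc.pow 3).div_const 3)
      (fun x hx => by
        have hmem : s ∈ nhds x := Icc_mem_nhds hx.1 hx.2
        have hd : HasDerivAt v (f x) x :=
          ((hv.differentiableOn one_ne_zero x (Set.Ioo_subset_Icc_self hx)).hasDerivWithinAt).hasDerivAt hmem
        have : HasDerivAt (fun x => v x ^ 3 / 3) (v x ^ 2 * f x) x := by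
          have := (hd.fun_pow 3).div_const 3
          refine this.congr_deriv ?_
          push_cast
          ring
        exact this.hasDerivWithinAt)
      (((hvc.pow 2).mul hfc).intervalIntegrable_of_Icc hLL)
    rw [this]
    norm_num [hvL, hvR]
  -- integrability of the pieces
  have hint1 : IntervalIntegrable (fun x => 2 * (v x * Φ x * f x)) volume (-L) L :=
    (continuousOn_const.mul ((hvc.mul hΦ).mul hfc)).intervalIntegrable_of_Icc hLL
  have hint2 : IntervalIntegrable (fun x => Φ x ^ 2 * f x) volume (-L) L :=
    ((hΦ.pow 2).mul hfc).intervalIntegrable_of_Icc hLL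
  have hint0 : IntervalIntegrable (fun x => v x ^ 2 * f x) volume (-L) L :=
    ((hvc.pow 2).mul hfc).intervalIntegrable_of_Icc hLL
  -- split the integral
  have hsplit : ∫ x in (-L : ℝ)..L, (v x + Φ x) ^ 2 * f x =
      (∫ x in (-L : ℝ)..L, v x ^ 2 * f x) +
      ((∫ x in (-L : ℝ)..L, 2 * (v x * Φ x * f x)) + ∫ x in (-L : ℝ)..L, Φ x ^ 2 * f x) := by
    rw [← intervalIntegral.integral_add hint1 hint2, ← intervalIntegral.integral_add hint0
      (hint1.add hint2)]
    apply intervalIntegral.integral_congr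
    intro x _
    ring
  -- bound the cross term
  have hA : (∫ x in (-L : ℝ)..L, 2 * (v x * Φ x * f x)) ≤
      2 * M * (Real.sqrt (∫ x in (-L : ℝ)..L, v x ^ 2) *
        Real.sqrt (∫ x in (-L : ℝ)..L, f x ^ 2)) := by
    have step1 : (∫ x in (-L : ℝ)..L, 2 * (v x * Φ x * f x)) ≤
        ∫ x in (-L : ℝ)..L, 2 * M * (|v x| * |f x|) := by
      apply intervalIntegral.integral_mono_on hLL hint1
      · exact (continuousOn_const.mul (hvc.abs.mul hfc.abs)).intervalIntegrable_of_Icc hLL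
      · intro x hx
        calc 2 * (v x * Φ x * f x) ≤ |2 * (v x * Φ x * f x)| := le_abs_self _
          _ = 2 * (|Φ x| * (|v x| * |f x|)) := by
              rw [abs_mul, abs_mul, abs_mul, abs_two]; ring
          _ ≤ 2 * (M * (|v x| * |f x|)) := by
              have h1 := hMle x hx
              have h2 : 0 ≤ |v x| * |f x| := mul_nonneg (abs_nonneg _) (abs_nonneg _)
              nlinarith [mul_le_mul_of_nonneg_right h1 h2]
          _ = 2 * M * (|v x| * |f x|) := by ring
    calc (∫ x in (-L : ℝ)..L, 2 * (v x * Φ x * f x))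
        ≤ ∫ x in (-L : ℝ)..L, 2 * M * (|v x| * |f x|) := step1
      _ = 2 * M * ∫ x in (-L : ℝ)..L, |v x| * |f x| :=
          intervalIntegral.integral_const_mul _ _
      _ ≤ 2 * M * (Real.sqrt (∫ x in (-L : ℝ)..L, v x ^ 2) *
          Real.sqrt (∫ x in (-L : ℝ)..L, f x ^ 2)) := by
          apply mul_le_mul_of_nonneg_left (cs_interval hLL hvc hfc) (by positivity)
  -- bound the Φ² term
  have hB : (∫ x in (-L : ℝ)..L, Φ x ^ 2 * f x) ≤
      Real.sqrt (∫ x in (-L : ℝ)..L, Φ x ^ 4) * Real.sqrt (∫ x in (-L : ℝ)..L, f x ^ 2) := by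
    have step1 : (∫ x in (-L : ℝ)..L, Φ x ^ 2 * f x) ≤
        ∫ x in (-L : ℝ)..L, |Φ x ^ 2| * |f x| := by
      apply intervalIntegral.integral_mono_on hLL hint2
        (((hΦ.pow 2).abs.mul hfc.abs).intervalIntegrable_of_Icc hLL)
      intro x hx
      calc Φ x ^ 2 * f x ≤ |Φ x ^ 2 * f x| := le_abs_self _
        _ = |Φ x ^ 2| * |f x| := abs_mul _ _
    have step2 := cs_interval hLL (f := fun x => Φ x ^ 2) (g := f) (hΦ.pow 2) hfc
    have heq : (∫ x in (-L : ℝ)..L, (Φ x ^ 2) ^ 2) = ∫ x in (-L : ℝ)..L, Φ x ^ 4 := by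
      apply intervalIntegral.integral_congr
      intro x _
      ring
    rw [heq] at step2
    exact le_trans step1 step2
  rw [hsplit, hzero, zero_add]
  have := add_le_add hA hB
  calc (∫ x in (-L : ℝ)..L, 2 * (v x * Φ x * f x)) + ∫ x in (-L : ℝ)..L, Φ x ^ 2 * f x
      ≤ 2 * M * (Real.sqrt (∫ x in (-L : ℝ)..L, v x ^ 2) *
          Real.sqrt (∫ x in (-L : ℝ)..L, f x ^ 2)) +
        Real.sqrt (∫ x in (-L : ℝ)..L, Φ x ^ 4) * Real.sqrt (∫ x in (-L : ℝ)..L, f x ^ 2) := this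
    _ = Real.sqrt (∫ x in (-L : ℝ)..L, f x ^ 2) * Real.sqrt (∫ x in (-L : ℝ)..L, Φ x ^ 4) +
        2 * Real.sqrt (∫ x in (-L : ℝ)..L, f x ^ 2) * M * Real.sqrt (∫ x in (-L : ℝ)..L, v x ^ 2) := by ring
end
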